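/- arXiv:1607.01098 — 11 statements merged into one kernel-verified Lean document; each statement's English description precedes it below -/
import Mathlib

section
/- For integers n ≥ 2s ≥ 0, define D_n^r = (-1)^r (C(n-r, r) + C(n-r-1, r-1)) (with the convention C(a,b)=0 if b<0 or a<b). Then ∑_{r=0}^{s} C(n, r) · D_{n-2r}^{s-r} = δ_{s,0}, where δ_{s,0} is 1 if s=0 and 0 otherwise. -/
def C (n r : ℤ) : ℤ :=
  if r < 0 then 0
  else if 0 ≤ n then (n.toNat.choose r.toNat : ℤ)
  else (-1) ^ r.toNat * ((r - n - 1).toNat.choose r.toNat : ℤ)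

lemma C_neg {n r : ℤ} (h : r < 0) : C n r = 0 := by simp [C, h]

lemma C_zero (n : ℤ) : C n 0 = 1 := by
  unfold C; split
  · omega
  · split <;> simp

lemma C_eq_choose {n r : ℤ} (hn : 0 ≤ n) (hr : 0 ≤ r) :
    C n r = (n.toNat.choose r.toNat : ℤ) := by
  simp [C, not_lt.mpr hr, hn]

lemma C_self {m : ℤ} (h : 0 ≤ m) : C m m = 1 := by
  rw [C_eq_choose h h, Nat.choose_self]; norm_num

lemma C_pascal {n : ℤ} (r : ℤ) (hn : 0 ≤ n) :
    C n r = C (n-1) r + C (n-1) (r-1) := by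
  rcases lt_or_ge r 0 with hr | hr
  · rw [C_neg hr, C_neg hr, C_neg (by omega : r - 1 < 0)]; ring
  rcases eq_or_lt_of_le hr with hr0 | hr1
  · rw [← hr0, C_zero, C_zero, C_neg (by omega : (0:ℤ) - 1 < 0)]; ring
  rcases eq_or_lt_of_le hn with hn0 | hn1
  · rw [C_eq_choose hn hr]
    have h0 : n.toNat = 0 := by omega
    have hrt : r.toNat = (r-1).toNat + 1 := by omega
    rw [h0, Nat.choose_eq_zero_of_lt (by omega)]
    have hneg : ¬ (0 ≤ n - 1) := by omega
    have hnl : ¬ (r < 0) := by omega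
    have hnl2 : ¬ (r - 1 < 0) := by omega
    unfold C
    rw [if_neg hnl, if_neg hneg, if_neg hnl2, if_neg hneg]
    have e1 : (r - (n-1) - 1).toNat = r.toNat := by omega
    have e2 : (r - 1 - (n-1) - 1).toNat = (r-1).toNat := by omega
    rw [e1, e2, Nat.choose_self, Nat.choose_self, hrt]
    push_cast; ring
  · rw [C_eq_choose hn hr, C_eq_choose (by omega) hr, C_eq_choose (by omega) (by omega)]
    have h1 : n.toNat = (n-1).toNat + 1 := by omega
    have h2 : r.toNat = (r-1).toNat + 1 := by omega
    rw [h1, h2, Nat.choose_succ_succ]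
    push_cast; ring

lemma C_pascal' {n : ℤ} (r : ℤ) (hn : -1 ≤ n) :
    C (n+1) r = C n r + C n (r-1) := by
  have := C_pascal (n := n+1) r (by omega)
  simpa using this

lemma alt_sum (s : ℕ) (N : ℤ) (hN : 0 ≤ N) :
    ∑ r ∈ Finset.range (s+1), (-1:ℤ)^r * C N r = (-1)^s * C (N-1) s := by
  induction s with
  | zero => simp [C_zero]
  | succ t ih =>
    rw [Finset.sum_range_succ, ih]
    have : C N ((t:ℤ)+1) = C (N-1) ((t:ℤ)+1) + C (N-1) t := by
      have := C_pascal ((t:ℤ)+1) hN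
      simpa using this
    push_cast
    rw [this]
    ring

@[elab_as_elim]
lemma intLeInduction {m : ℤ} {P : ∀ n : ℤ, m ≤ n → Prop}
    (base : P m le_rfl)
    (succ : ∀ n (hn : m ≤ n), P n hn → P (n + 1) (le_trans hn (by omega))) :
    ∀ n (hn : m ≤ n), P n hn := by
  intro n hn
  have : ∀ N : ℤ, m ≤ N → ∀ h : m ≤ N, P N h :=
    Int.le_induction (fun h => base) (fun N hN ih h => succ N hN (ih hN))
  exact this n hn hn

lemma Flem (s : ℕ) : ∀ k n : ℤ, 0 ≤ k → 2*(s:ℤ) + k ≤ n →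
    ∑ r ∈ Finset.range (s+1), (-1:ℤ)^r * C n r * C (n - s - r - k) ((s:ℤ) - r)
      = (-1)^s * C (2*(s:ℤ)+k-1) s := by
  induction s using Nat.strong_induction_on with
  | _ s IH =>
  match s with
  | 0 =>
    intro k n hk hn
    simp [C_zero]
  | (t+1) =>
    intro k n hk hn
    induction n, hn using intLeInduction with
    | base =>
      push_cast
      have h1 : ∀ r ∈ Finset.range (t+2),
          (-1:ℤ)^r * C (2*((t:ℤ)+1)+k) r
            * C (2*((t:ℤ)+1)+k - ((t:ℤ)+1) - r - k) (((t:ℤ)+1) - r)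
          = (-1:ℤ)^r * C (2*((t:ℤ)+1)+k) r := by
        intro r hr
        simp only [Finset.mem_range] at hr
        rw [show 2*((t:ℤ)+1)+k - ((t:ℤ)+1) - r - k = ((t:ℤ)+1) - r by ring,
          C_self (by omega : (0:ℤ) ≤ ((t:ℤ)+1) - r), mul_one]
      rw [Finset.sum_congr rfl h1]
      have := alt_sum (t+1) (2*((t:ℤ)+1)+k) (by omega)
      push_cast at this
      rw [this]
    | succ n hn ihn =>
      push_cast at ihn hn ⊢
      have expand : ∀ r ∈ Finset.range (t+2),
          (-1:ℤ)^r * C (n+1) r * C (n+1 - ((t:ℤ)+1) - r - k) (((t:ℤ)+1) - r)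
          = ((-1:ℤ)^r * C n r * C (n - ((t:ℤ)+1) - r - k) (((t:ℤ)+1) - r)
            + (-1:ℤ)^r * C n r * C (n - ((t:ℤ)+1) - r - k) (((t:ℤ)+1) - r - 1))
          + ((-1:ℤ)^r * C n (r-1) * C (n - ((t:ℤ)+1) - r - k) (((t:ℤ)+1) - r)
            + (-1:ℤ)^r * C n (r-1) * C (n - ((t:ℤ)+1) - r - k) (((t:ℤ)+1) - r - 1)) := by
        intro r hr
        simp only [Finset.mem_range] at hr
        rw [C_pascal' (r:ℤ) (by omega : (-1:ℤ) ≤ n),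
          show n+1 - ((t:ℤ)+1) - r - k = (n - ((t:ℤ)+1) - r - k) + 1 by ring,
          C_pascal' (((t:ℤ)+1) - r) (by omega : (-1:ℤ) ≤ n - ((t:ℤ)+1) - r - k)]
        ring
      rw [Finset.sum_congr rfl expand, Finset.sum_add_distrib,
        Finset.sum_add_distrib, Finset.sum_add_distrib, ihn]
      -- A2
      have hA2 : ∑ r ∈ Finset.range (t+2),
          (-1:ℤ)^r * C n r * C (n - ((t:ℤ)+1) - r - k) (((t:ℤ)+1) - r - 1)
          = (-1:ℤ)^t * C (2*(t:ℤ)+k) t := by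
        rw [Finset.sum_range_succ,
          C_neg (by push_cast; omega : (((t:ℤ)+1) - ((t+1:ℕ):ℤ) - 1) < 0), mul_zero]
        have h2 : ∀ r ∈ Finset.range (t+1),
            (-1:ℤ)^r * C n r * C (n - ((t:ℤ)+1) - r - k) (((t:ℤ)+1) - r - 1)
            = (-1:ℤ)^r * C n r * C (n - (t:ℤ) - r - (k+1)) ((t:ℤ) - r) := by
          intro r hr
          rw [show n - ((t:ℤ)+1) - r - k = n - (t:ℤ) - r - (k+1) by ring,
            show ((t:ℤ)+1) - r - 1 = (t:ℤ) - r by ring]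
        rw [add_zero, Finset.sum_congr rfl h2,
          IH t (by omega) (k+1) n (by omega) (by omega),
          show 2*(t:ℤ)+(k+1)-1 = 2*(t:ℤ)+k by ring]
      -- A3
      have hA3 : ∑ r ∈ Finset.range (t+2),
          (-1:ℤ)^r * C n (r-1) * C (n - ((t:ℤ)+1) - r - k) (((t:ℤ)+1) - r)
          = -((-1:ℤ)^t * C (2*(t:ℤ)+k+1) t) := by
        rw [Finset.sum_range_succ']
        simp only [Nat.cast_zero, C_neg (by norm_num : (0:ℤ) - 1 < 0), mul_zero, zero_mul, add_zero]
        have h3 : ∀ j ∈ Finset.range (t+1),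
            (-1:ℤ)^(j+1) * C n (((j+1:ℕ):ℤ)-1) * C (n - ((t:ℤ)+1) - ((j+1:ℕ):ℤ) - k) (((t:ℤ)+1) - ((j+1:ℕ):ℤ))
            = -((-1:ℤ)^j * C n j * C (n - (t:ℤ) - j - (k+2)) ((t:ℤ) - j)) := by
          intro j hj
          push_cast
          rw [show (j:ℤ)+1-1 = (j:ℤ) by ring,
            show n - ((t:ℤ)+1) - ((j:ℤ)+1) - k = n - (t:ℤ) - j - (k+2) by ring,
            show ((t:ℤ)+1) - ((j:ℤ)+1) = (t:ℤ) - j by ring, pow_succ]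
          ring
        rw [Finset.sum_congr rfl h3, Finset.sum_neg_distrib,
          IH t (by omega) (k+2) n (by omega) (by omega),
          show 2*(t:ℤ)+(k+2)-1 = 2*(t:ℤ)+k+1 by ring]
      -- A4
      have hA4 : ∑ r ∈ Finset.range (t+2),
          (-1:ℤ)^r * C n (r-1) * C (n - ((t:ℤ)+1) - r - k) (((t:ℤ)+1) - r - 1)
          = (-1:ℤ)^t * C (2*(t:ℤ)+k) ((t:ℤ)-1) := by
        rw [Finset.sum_range_succ']
        simp only [Nat.cast_zero, C_neg (by norm_num : (0:ℤ) - 1 < 0), mul_zero, zero_mul, add_zero]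
        match t with
        | 0 =>
          rw [Finset.sum_eq_zero, C_neg (show ((0:ℕ):ℤ) - 1 < 0 by norm_num)]
          · ring
          · intro j hj
            apply mul_eq_zero_of_right
            apply C_neg
            push_cast
            omega
        | (u+1) =>
          rw [Finset.sum_range_succ]
          have hzero : C (n - (((u+1:ℕ):ℤ))+1-1 - ((u+1+1:ℕ):ℤ) - k) ((((u+1:ℕ):ℤ))+1 - ((u+1+1:ℕ):ℤ) - 1) = 0 := by
            apply C_neg; push_cast; omega
          have h4 : ∀ j ∈ Finset.range (u+1),
              (-1:ℤ)^(j+1) * C n (((j+1:ℕ):ℤ)-1) * C (n - (((u+1:ℕ):ℤ)+1) - ((j+1:ℕ):ℤ) - k) ((((u+1:ℕ):ℤ))+1 - ((j+1:ℕ):ℤ) - 1)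
              = -((-1:ℤ)^j * C n j * C (n - (u:ℤ) - j - (k+3)) ((u:ℤ) - j)) := by
            intro j hj
            push_cast
            rw [show (j:ℤ)+1-1 = (j:ℤ) by ring,
              show n - ((u:ℤ)+1+1) - ((j:ℤ)+1) - k = n - (u:ℤ) - j - (k+3) by ring,
              show ((u:ℤ)+1)+1 - ((j:ℤ)+1) - 1 = (u:ℤ) - j by ring, pow_succ]
            ring
          have hlast : (-1:ℤ)^(u+1+1) * C n (((u+1+1:ℕ):ℤ)-1) * C (n - (((u+1:ℕ):ℤ)+1) - ((u+1+1:ℕ):ℤ) - k) ((((u+1:ℕ):ℤ))+1 - ((u+1+1:ℕ):ℤ) - 1) = 0 := by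
            apply mul_eq_zero_of_right
            apply C_neg; push_cast; omega
          rw [hlast, add_zero, Finset.sum_congr rfl h4, Finset.sum_neg_distrib,
            IH u (by omega) (k+3) n (by omega) (by push_cast at hn ⊢; omega),
            show 2*(u:ℤ)+(k+3)-1 = 2*(u:ℤ)+k+2 by ring]
          push_cast
          rw [show 2*((u:ℤ)+1)+k = 2*(u:ℤ)+k+2 by ring,
            show (u:ℤ)+1-1 = (u:ℤ) by ring, pow_succ]
          ring
      rw [hA2, hA3, hA4]
      have hp : C (2*(t:ℤ)+k+1) (t:ℤ) = C (2*(t:ℤ)+k) (t:ℤ) + C (2*(t:ℤ)+k) ((t:ℤ)-1) := by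
        have := C_pascal' (n := 2*(t:ℤ)+k) (t:ℤ) (by omega)
        exact this
      rw [hp]
      ring

def D (n r : ℤ) : ℤ := (-1) ^ r.toNat * (C (n - r) r + C (n - r - 1) (r - 1))

theorem stmt_0 (n s : ℕ) (h : 2 * s ≤ n) :
    ∑ r ∈ Finset.range (s + 1), C n r * D ((n : ℤ) - 2 * r) ((s : ℤ) - r)
      = if s = 0 then 1 else 0 := by
  match s with
  | 0 =>
    rw [Finset.sum_range_one]
    simp [D, C_zero, C_neg (show (-1:ℤ) < 0 by norm_num)]
  | (t+1) =>
    set s := t + 1 with hs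
    rw [if_neg (by omega : ¬ s = 0)]
    have key : ∀ r ∈ Finset.range (s+1),
        C (n:ℤ) (r:ℤ) * D ((n:ℤ) - 2*(r:ℤ)) ((s:ℤ) - (r:ℤ))
        = (-1:ℤ)^s * ((-1:ℤ)^r * C (n:ℤ) (r:ℤ) * C ((n:ℤ) - (s:ℤ) - (r:ℤ) - 0) ((s:ℤ)-(r:ℤ)))
          + (-1:ℤ)^s * ((-1:ℤ)^r * C (n:ℤ) (r:ℤ) * C ((n:ℤ) - (s:ℤ) - (r:ℤ) - 1) ((s:ℤ)-(r:ℤ)-1)) := by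
      intro r hr
      simp only [Finset.mem_range] at hr
      unfold D
      rw [show (((s:ℤ) - (r:ℤ))).toNat = s - r by omega,
        show (n:ℤ) - 2*(r:ℤ) - ((s:ℤ)-(r:ℤ)) = (n:ℤ) - (s:ℤ) - (r:ℤ) - 0 by ring,
        show (n:ℤ) - (s:ℤ) - (r:ℤ) - 0 - 1 = (n:ℤ) - (s:ℤ) - (r:ℤ) - 1 by ring]
      have hpow : (-1:ℤ)^s * (-1:ℤ)^r = (-1:ℤ)^(s-r) := by
        rw [← pow_add, show s+r = (s-r)+2*r by omega, pow_add, pow_mul]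
        norm_num
      rw [← hpow]
      ring
    rw [Finset.sum_congr rfl key, Finset.sum_add_distrib, ← Finset.mul_sum, ← Finset.mul_sum,
      Flem s 0 n (by norm_num) (by push_cast; omega)]
    have hsecond : ∑ r ∈ Finset.range (s+1),
        (-1:ℤ)^r * C (n:ℤ) (r:ℤ) * C ((n:ℤ) - (s:ℤ) - (r:ℤ) - 1) ((s:ℤ)-(r:ℤ)-1)
        = (-1:ℤ)^t * C (2*(t:ℤ)+1) (t:ℤ) := by
      rw [Finset.sum_range_succ]
      have hlast : C ((n:ℤ) - (s:ℤ) - ((s:ℕ):ℤ) - 1) ((s:ℤ)-((s:ℕ):ℤ)-1) = 0 := by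
        apply C_neg; omega
      rw [hlast, mul_zero, add_zero]
      have h2 : ∀ r ∈ Finset.range (t+1),
          (-1:ℤ)^r * C (n:ℤ) (r:ℤ) * C ((n:ℤ) - (s:ℤ) - (r:ℤ) - 1) ((s:ℤ)-(r:ℤ)-1)
          = (-1:ℤ)^r * C (n:ℤ) (r:ℤ) * C ((n:ℤ) - (t:ℤ) - (r:ℤ) - 2) ((t:ℤ)-(r:ℤ)) := by
        intro r hr
        rw [show (n:ℤ) - (s:ℤ) - (r:ℤ) - 1 = (n:ℤ) - (t:ℤ) - (r:ℤ) - 2 by rw [hs]; push_cast; ring,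
          show (s:ℤ)-(r:ℤ)-1 = (t:ℤ)-(r:ℤ) by rw [hs]; push_cast; ring]
      rw [Finset.sum_congr rfl h2, Flem t 2 n (by norm_num) (by omega),
        show 2*(t:ℤ)+2-1 = 2*(t:ℤ)+1 by ring]
    rw [hsecond]
    have hC1 : C (2*(s:ℤ)+0-1) (s:ℤ) = ((2*t+1).choose (t+1) : ℤ) := by
      rw [C_eq_choose (by omega) (by omega),
        show (2*(s:ℤ)+0-1).toNat = 2*t+1 by omega,
        show ((s:ℕ):ℤ).toNat = t+1 by omega]
    have hC2 : C (2*(t:ℤ)+1) (t:ℤ) = ((2*t+1).choose t : ℤ) := by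
      rw [C_eq_choose (by omega) (by omega),
        show (2*(t:ℤ)+1).toNat = 2*t+1 by omega,
        show ((t:ℕ):ℤ).toNat = t by omega]
    rw [hC1, hC2]
    have hsym : (2*t+1).choose (t+1) = (2*t+1).choose t := by
      have := Nat.choose_symm (show t+1 ≤ 2*t+1 by omega)
      rw [show 2*t+1-(t+1) = t by omega] at this
      omega
    rw [hsym, show (-1:ℤ)^s = -(-1:ℤ)^t by rw [hs, pow_succ]; ring]
    ring
end

section
/- Let n, s be nonnegative integers with n ≥ 2s and s ≥ 1. Then ∑_{r=0}^{s-1} (-1)^{s-r} C(n, r) · C(n-s-r-1, s-r-1) = -C(2s-1, s-1). -/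
/-!
Negating the upper index, `C(n-s-r-1, s-r-1) = (-1)^(s-r-1) C(2s-n-1, s-r-1)`, so every
summand becomes `-C(n, r) C(2s-n-1, s-1-r)` and the sum is minus the Chu–Vandermonde
convolution for `C(n + (2s-n-1), s-1)`.
-/

open Finset

namespace Ring

variable {R : Type*} [CommRing R] [BinomialRing R]

theorem choose_eq_neg_one_pow_mul_choose (r : R) (k : ℕ) :
    choose r k = (-1) ^ k * choose (k - r - 1) k := by
  rw [← neg_neg r, choose_neg, Units.smul_def, zsmul_eq_mul, Int.cast_negOnePow_natCast]
  ring_nf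

theorem sum_neg_one_pow_mul_choose_mul_choose (a : R) (m : ℕ) :
    ∑ r ∈ range (m + 1), (-1) ^ (m + 1 - r) * choose a r * choose (a - m - r - 2) (m - r)
      = -((2 * m + 1).choose m : R) := by
  have hterm : ∀ r ∈ range (m + 1), (-1) ^ (m + 1 - r) * choose a r * choose (a - m - r - 2) (m - r)
      = -(choose a r * choose (2 * m + 1 - a) (m - r)) := by
    intro r hr
    have hrm : r ≤ m := Nat.lt_succ_iff.mp (mem_range.mp hr)
    have hsign : (-1 : R) ^ (m + 1 - r) * (-1) ^ (m - r) = -1 := by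
      rw [← pow_add]
      exact Odd.neg_one_pow ⟨m - r, by omega⟩
    rw [choose_eq_neg_one_pow_mul_choose (a - m - r - 2), Nat.cast_sub hrm,
      show (m - r : R) - (a - m - r - 2) - 1 = 2 * m + 1 - a by ring]
    linear_combination (choose a r * choose (2 * m + 1 - a) (m - r)) * hsign
  rw [sum_congr rfl hterm, sum_neg_distrib, ← Nat.sum_antidiagonal_eq_sum_range_succ_mk
    (fun ij => choose a ij.1 * choose (2 * m + 1 - a) ij.2), ← add_choose_eq m (Commute.all _ _),
    add_sub_cancel, ← choose_natCast]
  push_cast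
  rfl

end Ring

theorem C_natCast_eq_ringChoose (a : ℤ) (k : ℕ) : C a k = Ring.choose a k := by
  rcases le_or_gt 0 a with ha | ha
  · lift a to ℕ using ha
    simp [C, Ring.choose_natCast]
  · obtain ⟨m, rfl⟩ : ∃ m : ℕ, a = -(m + 1 : ℤ) := ⟨(-a - 1).toNat, by omega⟩
    have hupper : ((k : ℤ) - -(m + 1 : ℤ) - 1).toNat = m + k := by omega
    rw [Ring.choose_neg, Units.smul_def, zsmul_eq_mul, Int.cast_negOnePow_natCast,
      show (m + 1 : ℤ) + k - 1 = (m + k : ℕ) by push_cast; ring, Ring.choose_natCast,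
      C, if_neg (by omega), if_neg (by omega), hupper, Int.toNat_natCast]

theorem stmt_2_general (n s : ℕ) :
    ∑ r ∈ Finset.range s,
      (-1 : ℤ) ^ (s - r) * C n r * C ((n : ℤ) - s - r - 1) ((s : ℤ) - r - 1)
      = -C (2 * (s : ℤ) - 1) ((s : ℤ) - 1) := by
  rcases s with _ | m
  · simp [C]
  have hterm : ∀ r ∈ range (m + 1),
      (-1 : ℤ) ^ (m + 1 - r) * C n r * C ((n : ℤ) - (m + 1 : ℕ) - r - 1) ((m + 1 : ℕ) - r - 1)
        = (-1) ^ (m + 1 - r) * Ring.choose (n : ℤ) r * Ring.choose ((n : ℤ) - m - r - 2) (m - r) := by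
    intro r hr
    have hrm : r ≤ m := Nat.lt_succ_iff.mp (mem_range.mp hr)
    rw [show ((m + 1 : ℕ) : ℤ) - r - 1 = (m - r : ℕ) by omega,
      show (n : ℤ) - (m + 1 : ℕ) - r - 1 = n - m - r - 2 by push_cast; ring,
      C_natCast_eq_ringChoose, C_natCast_eq_ringChoose]
  rw [sum_congr rfl hterm, Ring.sum_neg_one_pow_mul_choose_mul_choose,
    show 2 * ((m + 1 : ℕ) : ℤ) - 1 = (2 * m + 1 : ℕ) by push_cast; ring,
    show ((m + 1 : ℕ) : ℤ) - 1 = m by push_cast; ring, C_natCast_eq_ringChoose, Ring.choose_natCast]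

theorem stmt_2 (n s : ℕ) (h : 2 * s ≤ n) (hs : 1 ≤ s) :
    ∑ r ∈ Finset.range s,
      (-1 : ℤ) ^ (s - r) * C n r * C ((n : ℤ) - s - r - 1) ((s : ℤ) - r - 1)
      = -C (2 * (s : ℤ) - 1) ((s : ℤ) - 1) :=
  stmt_2_general n s
end

section
/- For nonnegative integers l ≤ n and 0 ≤ s ≤ n-l, define B_{l,n}^r = C(l+r, r)·C(n-r, n-l-r) − C(l+r-1, r-1)·C(n-r-1, n-l-r-1) for 0 ≤ r ≤ n-l. Then ∑_{r=0}^{s} C(n, r) · B_{l, n-2r}^{s-r} = C(n, l) · C(n-l, s). -/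
def B (l n r : ℤ) : ℤ :=
  C (l + r) r * C (n - r) (n - l - r) - C (l + r - 1) (r - 1) * C (n - r - 1) (n - l - r - 1)

/-!
Write `n = l + s + a`. Then `B_{l,n-2r}^{s-r} = P(r) - P(r+1)` with
`P(r) = C(l+s-r, s-r) C(l+a-r, a-r)`, so summation by parts turns the left-hand side into
`∑ r, (C(n,r) - C(n,r-1)) P(r)`. As a function of `(l, s, a)` this sum satisfies the
trinomial Pascal recursion, by Pascal's rule in each of its three binomial factors, and it
has the boundary values of the multinomial coefficient `n! / (l! s! a!) = C(n,l) C(s+a,s)`.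
-/

theorem Finset.sum_range_succ_eq_of_eq_zero {M : Type*} [AddCommMonoid M] (f : ℕ → M)
    {N : ℕ} (h0 : f 0 = 0) (hN : f N = 0) :
    ∑ r ∈ range N, f (r + 1) = ∑ r ∈ range N, f r := by
  have := (sum_range_succ' f N).symm.trans (sum_range_succ f N)
  rwa [h0, hN, add_zero, add_zero] at this

namespace C

theorem of_neg {n r : ℤ} (h : r < 0) : C n r = 0 := by simp [C, h]

theorem natCast (n r : ℕ) : C n r = n.choose r := by simp [C]

theorem self {n : ℤ} (hn : 0 ≤ n) : C n n = 1 := by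
  lift n to ℕ using hn
  simp [natCast]

theorem zero_right {n : ℤ} (hn : 0 ≤ n) : C n 0 = 1 := by
  lift n to ℕ using hn
  simpa using natCast n 0

theorem succ {m : ℤ} (hm : 0 ≤ m) (r : ℤ) : C (m + 1) r = C m r + C m (r - 1) := by
  lift m to ℕ using hm
  rcases lt_trichotomy r 0 with hr | rfl | hr
  · rw [of_neg hr, of_neg hr, of_neg (by omega), add_zero]
  · rw [zero_right (by omega), zero_right (by omega), of_neg (by omega), add_zero]
  · obtain ⟨k, rfl⟩ : ∃ k : ℕ, r = k + 1 := ⟨(r - 1).toNat, by omega⟩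
    have h₁ := natCast (m + 1) (k + 1)
    have h₂ := natCast m (k + 1)
    push_cast at h₁ h₂
    rw [h₁, h₂, add_sub_cancel_right, natCast, Nat.choose_succ_succ']
    push_cast
    ring

end C

def ballot (n r : ℤ) : ℤ := C n r - C n (r - 1)

theorem ballot_neg_one (n : ℤ) : ballot n (-1) = 0 := by
  simp [ballot, C.of_neg]

theorem ballot_succ {m : ℤ} (hm : 0 ≤ m) (r : ℤ) :
    ballot (m + 1) r = ballot m r + ballot m (r - 1) := by
  simp only [ballot, C.succ hm]
  ring

theorem sum_range_ballot (n : ℤ) (k : ℕ) :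
    ∑ r ∈ Finset.range (k + 1), ballot n r = C n k := by
  have := Finset.sum_range_sub (fun r : ℕ => C n ((r : ℤ) - 1)) (k + 1)
  simpa only [ballot, Nat.cast_add, Nat.cast_one, add_sub_cancel_right, Nat.cast_zero, zero_sub,
    C.of_neg neg_one_lt_zero, sub_zero] using this

def pairBinom (l u v r : ℤ) : ℤ := C (l + u - r) (u - r) * C (l + v - r) (v - r)

theorem pairBinom_comm (l u v r : ℤ) : pairBinom l u v r = pairBinom l v u r :=
  mul_comm _ _

theorem pairBinom_of_lt_left {l u v r : ℤ} (h : u < r) : pairBinom l u v r = 0 := by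
  rw [pairBinom, C.of_neg (by omega), zero_mul]

theorem pairBinom_of_lt_right {l u v r : ℤ} (h : v < r) : pairBinom l u v r = 0 := by
  rw [pairBinom_comm, pairBinom_of_lt_left h]

theorem pairBinom_add_pairBinom_succ {l u v r : ℤ} (hl : 0 ≤ l) (hu : r ≤ u + 1)
    (hv : r ≤ v + 1) :
    pairBinom (l + 1) (u + 1) (v + 1) r + pairBinom (l + 1) (u + 1) (v + 1) (r + 1)
      = pairBinom l (u + 1) (v + 1) r + pairBinom (l + 1) u (v + 1) r
        + pairBinom (l + 1) (u + 1) v r := by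
  have pascal_u := C.succ (m := l + u + 1 - r) (by omega) (u + 1 - r)
  have pascal_v := C.succ (m := l + v + 1 - r) (by omega) (v + 1 - r)
  simp only [pairBinom]
  ring_nf at pascal_u pascal_v ⊢
  rw [pascal_u, pascal_v]
  ring

def ballotSum (l u v : ℕ) : ℤ :=
  ∑ r ∈ Finset.range (min u v + 1), ballot (l + u + v) r * pairBinom l u v r

theorem ballotSum_eq_sum_range {l u v N : ℕ} (hN : min u v + 1 ≤ N) :
    ballotSum l u v = ∑ r ∈ Finset.range N, ballot (l + u + v) r * pairBinom l u v r := by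
  refine Finset.sum_subset (Finset.range_subset_range.2 hN) fun r _ hr => ?_
  simp only [Finset.mem_range, not_lt] at hr
  rcases le_total u v with h | h
  · rw [pairBinom_of_lt_left (by omega), mul_zero]
  · rw [pairBinom_of_lt_right (by omega), mul_zero]

theorem ballotSum_comm (l u v : ℕ) : ballotSum l u v = ballotSum l v u := by
  simp only [ballotSum, min_comm u v, pairBinom_comm l u v, add_right_comm _ (u : ℤ)]

theorem ballotSum_zero_snd (l v : ℕ) : ballotSum l 0 v = (l + v).choose l := by
  rw [ballotSum, Nat.zero_min, zero_add, Finset.sum_range_one]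
  simp only [ballot, pairBinom, Nat.cast_zero, sub_zero, add_zero, zero_sub,
    C.of_neg neg_one_lt_zero, C.zero_right (by positivity : (0 : ℤ) ≤ l + v),
    C.zero_right (by positivity : (0 : ℤ) ≤ l)]
  rw [← Nat.cast_add, C.natCast, Nat.choose_symm_add]
  ring

theorem ballotSum_zero_fst (u v : ℕ) : ballotSum 0 u v = (u + v).choose u := by
  have hpair : ∀ r ∈ Finset.range (min u v + 1), pairBinom 0 u v r = 1 := by
    intro r hr
    simp only [Finset.mem_range] at hr
    simp only [pairBinom, zero_add]
    rw [C.self (by omega), C.self (by omega), one_mul]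
  rw [ballotSum]
  simp only [Nat.cast_zero, zero_add]
  rw [Finset.sum_congr rfl fun r hr => by rw [hpair r hr, mul_one],
    sum_range_ballot, ← Nat.cast_add, C.natCast]
  rcases le_total u v with h | h
  · rw [min_eq_left h]
  · rw [min_eq_right h, Nat.choose_symm_add]

theorem ballotSum_succ (l u v : ℕ) :
    ballotSum (l + 1) (u + 1) (v + 1)
      = ballotSum l (u + 1) (v + 1) + ballotSum (l + 1) u (v + 1)
        + ballotSum (l + 1) (u + 1) v := by
  set N := min u v + 2 with hN
  set m : ℤ := l + u + v + 2 with hm_def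
  set P := pairBinom (l + 1) (u + 1) (v + 1)
  have hm : (↑(l + 1) + ↑(u + 1) + ↑(v + 1) : ℤ) = m + 1 := by push_cast; ring
  have hP_top : P N = 0 := by
    rcases le_total u v with h | h
    · exact pairBinom_of_lt_left (by omega)
    · exact pairBinom_of_lt_right (by omega)
  have hshift : ∑ r ∈ Finset.range N, ballot m (r - 1) * P r
      = ∑ r ∈ Finset.range N, ballot m r * P (r + 1) := by
    refine .trans (Finset.sum_range_succ_eq_of_eq_zero
      (fun r : ℕ => ballot m (r - 1) * P r) ?_ ?_).symm ?_
    · simp [ballot_neg_one]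
    · simp [hP_top]
    · simp
  calc ballotSum (l + 1) (u + 1) (v + 1)
      = ∑ r ∈ Finset.range N, ballot (m + 1) r * P r := by
        rw [ballotSum_eq_sum_range (N := N) (by omega), hm]; rfl
    _ = ∑ r ∈ Finset.range N, ballot m r * (P r + P (r + 1)) := by
        simp only [ballot_succ (show 0 ≤ m by positivity), add_mul, mul_add,
          Finset.sum_add_distrib, hshift]
    _ = ∑ r ∈ Finset.range N, ballot m r * (pairBinom l (u + 1) (v + 1) r
          + pairBinom (l + 1) u (v + 1) r + pairBinom (l + 1) (u + 1) v r) := by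
        refine Finset.sum_congr rfl fun r hr => ?_
        simp only [Finset.mem_range] at hr
        rw [pairBinom_add_pairBinom_succ (by positivity) (by omega) (by omega)]
    _ = _ := by
        rw [ballotSum_eq_sum_range (N := N) (by omega),
          ballotSum_eq_sum_range (N := N) (by omega),
          ballotSum_eq_sum_range (N := N) (by omega), ← Finset.sum_add_distrib,
          ← Finset.sum_add_distrib]
        refine Finset.sum_congr rfl fun r _ => ?_
        push_cast
        rw [hm_def]
        ring_nf

theorem ballotSum_eq (l u v : ℕ) :
    ballotSum l u v = (l + u + v).choose l * (u + v).choose u := by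
  induction h : l + u + v using Nat.strong_induction_on generalizing l u v with
  | _ n ih =>
  subst h
  match l, u, v with
  | l, 0, v => simp [ballotSum_zero_snd]
  | l, u + 1, 0 => simp [ballotSum_comm, ballotSum_zero_snd]
  | 0, u + 1, v + 1 => simp [ballotSum_zero_fst]
  | l + 1, u + 1, v + 1 =>
    rw [ballotSum_succ, ih _ (by omega) l (u + 1) (v + 1) rfl,
      ih _ (by omega) (l + 1) u (v + 1) rfl, ih _ (by omega) (l + 1) (u + 1) v rfl,
      show l + 1 + (u + 1) + (v + 1) = l + u + v + 2 + 1 by ring,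
      show l + (u + 1) + (v + 1) = l + u + v + 2 by ring,
      show l + 1 + u + (v + 1) = l + u + v + 2 by ring,
      show l + 1 + (u + 1) + v = l + u + v + 2 by ring,
      show u + 1 + (v + 1) = u + v + 1 + 1 by ring,
      show u + (v + 1) = u + v + 1 by ring, add_right_comm u 1 v,
      Nat.choose_succ_succ (l + u + v + 2) l, Nat.choose_succ_succ (u + v + 1) u]
    push_cast
    ring

theorem stmt_4 (l n s : ℕ) (hl : l ≤ n) (hs : s ≤ n - l) :
    ∑ r ∈ Finset.range (s + 1), C n r * B l ((n : ℤ) - 2 * r) ((s : ℤ) - r)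
      = C n l * C ((n : ℤ) - l) s := by
  obtain ⟨a, rfl⟩ : ∃ a, n = l + s + a := ⟨n - l - s, by omega⟩
  set P := pairBinom l s a
  have hB (r : ℕ) : B l ((↑(l + s + a) : ℤ) - 2 * r) (s - r) = P r - P (r + 1) := by
    simp only [P, B, pairBinom]
    push_cast
    ring_nf
  have hshift : ∑ r ∈ Finset.range (s + 1), C (l + s + a : ℕ) r * P (r + 1)
      = ∑ r ∈ Finset.range (s + 1), C (l + s + a : ℕ) (r - 1) * P r := by
    refine Eq.trans ?_ (Finset.sum_range_succ_eq_of_eq_zero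
      (fun r : ℕ => C (l + s + a : ℕ) (r - 1) * P r) ?_ ?_)
    · simp
    · simp [C.of_neg]
    · simp [P, pairBinom_of_lt_left]
  calc _ = ∑ r ∈ Finset.range (s + 1), ballot (l + s + a : ℕ) r * P r := by
        simp only [hB, ballot, mul_sub, sub_mul, Finset.sum_sub_distrib, hshift]
    _ = ballotSum l s a := by
        rw [ballotSum_eq_sum_range (N := s + 1) (by omega)]
        push_cast
        rfl
    _ = _ := by
        rw [ballotSum_eq, C.natCast,
          show (↑(l + s + a) - ↑l : ℤ) = ↑(s + a) by push_cast; ring, C.natCast]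
end

section
/- The coefficients B_{l,n}^r = C(l+r, r)·C(n-r, n-l-r) − C(l+r-1, r-1)·C(n-r-1, n-l-r-1) satisfy the symmetry B_{l,n}^r = B_{l,n}^{n-l-r} for all 0 ≤ r ≤ n-l. -/
lemma C0 (a b : ℕ) : C ((a : ℤ) + b) b = ((a + b).choose b : ℤ) := by
  have h1 : ¬ ((b : ℤ) < 0) := by omega
  have h2 : (0 : ℤ) ≤ (a : ℤ) + b := by omega
  rw [C, if_neg h1, if_pos h2]
  congr 1

lemma Cm1 (a b : ℕ) :
    C ((a : ℤ) + b - 1) ((b : ℤ) - 1) = if b = 0 then 0 else ((a + b - 1).choose (b - 1) : ℤ) := by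
  rcases b with _ | b
  · rw [if_pos rfl, C, if_pos (by omega)]
  · rw [if_neg (by omega), C, if_neg (by omega), if_pos (by omega)]
    congr 2 <;> omega

theorem stmt_5 (l n r : ℕ) (hl : l ≤ n) (hr : r ≤ n - l) :
    B l n r = B l n ((n : ℤ) - l - r) := by
  obtain ⟨m, rfl⟩ : ∃ m : ℕ, n = l + r + m := ⟨n - l - r, by omega⟩
  rw [show ((l + r + m : ℕ) : ℤ) - l - r = (m : ℤ) from by push_cast; ring]
  simp only [B]
  rw [show ((l + r + m : ℕ) : ℤ) - r = (l : ℤ) + m from by push_cast; ring,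
      show ((l + r + m : ℕ) : ℤ) - l - r = (m : ℤ) from by push_cast; ring,
      show ((l + r + m : ℕ) : ℤ) - m = (l : ℤ) + r from by push_cast; ring,
      show ((l + r + m : ℕ) : ℤ) - l - m = (r : ℤ) from by push_cast; ring,
      C0 l r, C0 l m, Cm1 l r, Cm1 l m]
  ring
end

section
/- For nonnegative integers k, l, r with l+r ≤ k, ∑_{n=l+r}^{k} (-1)^n C(2k, k-n) · C(n-r, n-l-r) = (-1)^{l+r} C(2k-l-1, k-l-r). -/
open Finset

theorem Ring.choose_neg_natCast_add_one {R : Type*} [Ring R] [BinomialRing R] (l j : ℕ) :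
    Ring.choose (-(l + 1 : R)) j = (-1) ^ j * ((l + j).choose l : R) := by
  rw [Ring.choose_neg, add_sub_right_comm, add_sub_cancel_right, ← Nat.cast_add,
    Ring.choose_natCast, Nat.choose_symm_add, Units.smul_def, Int.coe_negOnePow_natCast,
    zsmul_eq_mul]
  push_cast; rfl

theorem Ring.choose_sub_natCast_add_one {R : Type*} [Ring R] [BinomialRing R] (a : R)
    (l M : ℕ) :
    Ring.choose (a - (l + 1)) M =
      ∑ j ∈ range (M + 1), (-1) ^ j * ((l + j).choose l : R) * Ring.choose a (M - j) := by
  rw [sub_eq_neg_add,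
    Ring.add_choose_eq M ((Nat.cast_commute l a).add_left (Commute.one_left a)).neg_left,
    Nat.sum_antidiagonal_eq_sum_range_succ
      (fun i j => Ring.choose (-(l + 1 : R)) i * Ring.choose a j)]
  simp only [Ring.choose_neg_natCast_add_one]

theorem C_natCast_right (n : ℤ) (r : ℕ) : C n r = Ring.choose n r := by
  rcases le_or_gt 0 n with hn | hn
  · lift n to ℕ using hn
    simp [C, Ring.choose_natCast]
  · obtain ⟨a, rfl⟩ : ∃ a : ℕ, n = -(a + 1 : ℤ) := ⟨(-n - 1).toNat, by omega⟩
    rw [Ring.choose_neg_natCast_add_one, C, if_neg (by omega), if_neg (by omega),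
      Int.toNat_natCast,
      show (r : ℤ) - -(a + 1 : ℤ) - 1 = ((a + r : ℕ) : ℤ) by push_cast; ring,
      Int.toNat_natCast, Nat.choose_symm_add]

theorem stmt_6 (k l r : ℕ) (h : l + r ≤ k) :
    ∑ n ∈ Finset.Icc (l + r) k,
      (-1 : ℤ) ^ n * C (2 * (k : ℤ)) ((k : ℤ) - n) * C ((n : ℤ) - r) ((n : ℤ) - l - r)
      = (-1) ^ (l + r) * C (2 * (k : ℤ) - l - 1) ((k : ℤ) - l - r) := by
  obtain ⟨M, rfl⟩ : ∃ M, k = l + r + M := ⟨k - (l + r), by omega⟩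
  have hterm : ∀ j ∈ range (M + 1),
      (-1 : ℤ) ^ (l + r + j)
          * C (2 * ((l + r + M : ℕ) : ℤ)) (((l + r + M : ℕ) : ℤ) - (l + r + j : ℕ))
          * C (((l + r + j : ℕ) : ℤ) - r) (((l + r + j : ℕ) : ℤ) - l - r)
        = (-1) ^ (l + r) * ((-1) ^ j * ((l + j).choose l : ℤ)
          * Ring.choose (2 * ((l + r + M : ℕ) : ℤ)) (M - j)) := by
    intro j hj
    have hjM : j ≤ M := Nat.lt_succ_iff.mp (mem_range.mp hj)
    rw [show ((l + r + M : ℕ) : ℤ) - (l + r + j : ℕ) = ((M - j : ℕ) : ℤ) by omega,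
      show ((l + r + j : ℕ) : ℤ) - r = ((l + j : ℕ) : ℤ) by omega,
      show ((l + r + j : ℕ) : ℤ) - l - r = (j : ℤ) by omega,
      C_natCast_right, C_natCast_right, Ring.choose_natCast, Nat.choose_symm_add, pow_add]
    ring
  rw [← Ico_add_one_right_eq_Icc, sum_Ico_eq_sum_range,
    show l + r + M + 1 - (l + r) = M + 1 by omega, sum_congr rfl hterm, ← mul_sum,
    show 2 * ((l + r + M : ℕ) : ℤ) - l - 1 = 2 * ((l + r + M : ℕ) : ℤ) - (l + 1) by ring,
    show ((l + r + M : ℕ) : ℤ) - l - r = (M : ℤ) by push_cast; ring,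
    C_natCast_right, Ring.choose_sub_natCast_add_one]
end

section
/- For nonnegative integers k, l, r with l+r ≤ k, define B_{l,n}^r = C(l+r, r)·C(n-r, n-l-r) − C(l+r-1, r-1)·C(n-r-1, n-l-r-1) and A_{k,l}^r = C(l+r-1, r-1)·C(2k-l-1, k-l-r-1) + C(l+r, r)·C(2k-l-1, k-l-r). Then ∑_{n=l+r}^{k} (-1)^n C(2k, k-n) B_{l,n}^r = (-1)^{l+r} A_{k,l}^r. -/
lemma ring_choose_neg : ∀ (m l : ℕ), Ring.choose (-(l:ℤ)-1) m = (-1)^m * ((m+l).choose l : ℤ) := by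
  intro m
  induction m with
  | zero => intro l; simp [Ring.choose_zero_right]
  | succ m ih =>
    intro l
    induction l with
    | zero =>
      have h : Ring.choose ((-1:ℤ) + 1) (m+1)
          = Ring.choose (-1:ℤ) m + Ring.choose (-1:ℤ) (m+1) :=
        Ring.choose_succ_succ (-1) m
      have h2 : Ring.choose (-1:ℤ) m = (-1)^m := by
        have := ih 0; simpa using this
      have h3 : Ring.choose ((-1:ℤ)+1) (m+1) = 0 := by
        norm_num
      have key : Ring.choose (-1:ℤ) (m+1) = -(-1)^m := by linarith [h, h2, h3]
      simp only [Nat.cast_zero]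
      rw [show -(0:ℤ)-1 = -1 by ring, key]
      simp [pow_succ]
    | succ l ihl =>
      have h : Ring.choose ((-(l:ℤ)-2) + 1) (m+1)
          = Ring.choose (-(l:ℤ)-2) m + Ring.choose (-(l:ℤ)-2) (m+1) :=
        Ring.choose_succ_succ _ m
      rw [show (-(l:ℤ)-2) + 1 = -(l:ℤ)-1 by ring] at h
      have e1 : Ring.choose (-(l:ℤ)-1) (m+1) = (-1)^(m+1) * ((m+1+l).choose l : ℤ) := ihl
      have e2 : Ring.choose (-(l:ℤ)-2) m = (-1)^m * ((m+(l+1)).choose (l+1) : ℤ) := by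
        have := ih (l+1)
        rw [show -(((l+1:ℕ)):ℤ)-1 = -(l:ℤ)-2 by push_cast; ring] at this
        exact this
      have goal : Ring.choose (-(l:ℤ)-2) (m+1)
          = (-1)^(m+1) * ((m+1+(l+1)).choose (l+1) : ℤ) := by
        have hp : (m+1+(l+1)).choose (l+1) = (m+1+l).choose l + (m+(l+1)).choose (l+1) := by
          rw [show m+1+(l+1) = (m+l+1)+1 by ring]
          rw [Nat.choose_succ_succ]
          congr 2 <;> omega
        rw [e1, e2] at h
        rw [hp]
        push_cast
        rw [pow_succ] at *
        linarith [h]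
      rw [show -(((l+1:ℕ)):ℤ)-1 = -(l:ℤ)-2 by push_cast; ring]
      exact goal

lemma sumkey (N l M : ℕ) (h : l + 1 ≤ N) :
    ∑ m ∈ Finset.range (M+1), (-1:ℤ)^m * ((m+l).choose l : ℤ) * (N.choose (M-m) : ℤ)
      = ((N-l-1).choose M : ℤ) := by
  have hadd := Ring.add_choose_eq (R := ℤ) (r := -(l:ℤ)-1) (s := (N:ℤ)) M (Commute.all _ _)
  have hL : (-(l:ℤ)-1) + N = ((N-l-1 : ℕ) : ℤ) := by
    push_cast [Nat.cast_sub (by omega : l+1 ≤ N)]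
    omega
  rw [hL, Ring.choose_natCast] at hadd
  rw [Finset.Nat.sum_antidiagonal_eq_sum_range_succ_mk] at hadd
  rw [hadd]
  apply Finset.sum_congr rfl
  intro m hm
  rw [ring_choose_neg m l, Ring.choose_natCast]


def A (k l r : ℤ) : ℤ :=
  C (l + r - 1) (r - 1) * C (2 * k - l - 1) (k - l - r - 1) + C (l + r) r * C (2 * k - l - 1) (k - l - r)

lemma C_nat (a b : ℕ) : C (a:ℤ) (b:ℤ) = (a.choose b : ℤ) := by
  unfold C
  rw [if_neg (by exact_mod_cast Int.not_lt.mpr (Int.natCast_nonneg b)),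
    if_pos (Int.natCast_nonneg a)]
  simp

lemma C_eval {x y : ℤ} (a b : ℕ) (hx : x = a) (hy : y = b) : C x y = (a.choose b : ℤ) := by
  subst hx; subst hy; exact C_nat a b

lemma C_negr {a b : ℤ} (hb : b < 0) : C a b = 0 := by unfold C; rw [if_pos hb]

theorem stmt_7 (k l r : ℕ) (h : l + r ≤ k) :
    ∑ n ∈ Finset.Icc (l + r) k, (-1 : ℤ) ^ n * C (2 * (k : ℤ)) ((k : ℤ) - n) * B l n r
      = (-1) ^ (l + r) * A k l r := by
  rcases Nat.eq_zero_or_pos k with hk | hk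
  · subst hk
    have hl : l = 0 := by omega
    have hr : r = 0 := by omega
    subst hl; subst hr
    decide
  · obtain ⟨M, hMdef⟩ : ∃ M, M = k - (l + r) := ⟨_, rfl⟩
    rw [← Finset.Ico_add_one_right_eq_Icc, Finset.sum_Ico_eq_sum_range]
    rw [show k + 1 - (l + r) = M + 1 by omega]
    set Q : ℤ := C ((l:ℤ) + r - 1) ((r:ℤ) - 1) with hQ
    have hterm : ∀ m ∈ Finset.range (M+1),
        (-1:ℤ)^(l+r+m) * C (2*(k:ℤ)) ((k:ℤ) - ↑(l+r+m)) * B ↑l ↑(l+r+m) ↑r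
        = (-1:ℤ)^(l+r) * ( ((l+r).choose r : ℤ) *
            ((-1:ℤ)^m * ((m+l).choose l : ℤ) * ((2*k).choose (M-m) : ℤ))
          - Q * ((-1:ℤ)^m * (if m = 0 then 0 else ((m+l-1).choose l : ℤ)) *
            ((2*k).choose (M-m) : ℤ)) ) := by
      intro m hm
      have hmM : m ≤ M := by simpa [Nat.lt_succ_iff] using hm
      have c1 : C (2*(k:ℤ)) ((k:ℤ) - ↑(l+r+m)) = ((2*k).choose (M-m) : ℤ) :=
        C_eval (2*k) (M-m) (by push_cast; ring) (by omega)
      have c2 : C ((l:ℤ) + r) (r:ℤ) = ((l+r).choose r : ℤ) :=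
        C_eval (l+r) r (by push_cast; ring) rfl
      have c3 : C ((↑(l+r+m):ℤ) - r) ((↑(l+r+m):ℤ) - l - r) = ((m+l).choose l : ℤ) := by
        rw [C_eval (m+l) m (by omega) (by omega)]
        rw [show m + l = l + m by ring, Nat.choose_symm_add]
      have c4 : C ((↑(l+r+m):ℤ) - r - 1) ((↑(l+r+m):ℤ) - l - r - 1)
          = (if m = 0 then 0 else ((m+l-1).choose l : ℤ)) := by
        rcases Nat.eq_zero_or_pos m with hm0 | hm0
        · subst hm0
          simp only [if_pos rfl]
          exact C_negr (by omega)
        · rw [if_neg (by omega)]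
          rw [C_eval (m+l-1) (m-1) (by omega) (by omega)]
          rw [show (m+l-1).choose (m-1) = (m+l-1).choose ((m+l-1)-l) by congr 1; omega]
          rw [Nat.choose_symm (by omega)]
      unfold B
      rw [c1, c2, c3, c4, ← hQ, pow_add]
      ring
    rw [Finset.sum_congr rfl hterm, ← Finset.mul_sum, Finset.sum_sub_distrib,
      ← Finset.mul_sum, ← Finset.mul_sum]
    have hS1 : ∑ m ∈ Finset.range (M+1),
        (-1:ℤ)^m * ((m+l).choose l : ℤ) * ((2*k).choose (M-m) : ℤ)
        = ((2*k-l-1).choose M : ℤ) := sumkey (2*k) l M (by omega)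
    have hS2 : ∑ m ∈ Finset.range (M+1),
        (-1:ℤ)^m * (if m = 0 then 0 else ((m+l-1).choose l : ℤ)) * ((2*k).choose (M-m) : ℤ)
        = -(if M = 0 then 0 else ((2*k-l-1).choose (M-1) : ℤ)) := by
      rcases Nat.eq_zero_or_pos M with hM0 | hM0
      · subst hM0; simp
      · obtain ⟨M', rfl⟩ : ∃ M', M = M' + 1 := ⟨M - 1, by omega⟩
        have key : ∀ i ∈ Finset.range (M'+1),
            ((-1:ℤ)^(i+1) * (if i+1 = 0 then 0 else ((i+1+l-1).choose l : ℤ))) *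
              ((2*k).choose (M'+1-(i+1)) : ℤ)
            = -((-1:ℤ)^i * ((i+l).choose l : ℤ) * ((2*k).choose (M'-i) : ℤ)) := by
          intro i _
          rw [if_neg (by omega), show i+1+l-1 = i+l by omega, show M'+1-(i+1) = M'-i by omega,
            pow_succ]
          ring
        rw [if_neg (by omega), Finset.sum_range_succ', if_pos rfl]
        simp only [mul_zero, zero_mul, add_zero]
        rw [Finset.sum_congr rfl key, Finset.sum_neg_distrib, sumkey (2*k) l M' (by omega),
          show (M'+1)-1 = M' by omega]
    rw [hS1, hS2]
    -- RHS
    unfold A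
    have a2 : C ((l:ℤ) + r) (r:ℤ) = ((l+r).choose r : ℤ) :=
      C_eval (l+r) r (by push_cast; ring) rfl
    have a3 : C (2*(k:ℤ) - l - 1) ((k:ℤ) - l - r) = ((2*k-l-1).choose M : ℤ) :=
      C_eval (2*k-l-1) M (by omega) (by omega)
    have a4 : C (2*(k:ℤ) - l - 1) ((k:ℤ) - l - r - 1)
        = (if M = 0 then 0 else ((2*k-l-1).choose (M-1) : ℤ)) := by
      rcases Nat.eq_zero_or_pos M with hM0 | hM0
      · rw [if_pos hM0]; exact C_negr (by omega)
      · rw [if_neg (by omega)]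
        exact C_eval (2*k-l-1) (M-1) (by omega) (by omega)
    rw [a2, a3, a4, ← hQ]
    ring
end

section
/- For k ≥ 1: A_{k+1,1}^0 = (k+1)(2 A_{k,0}^0 − A_{k,0}^1) and A_{k+1,1}^r = (k+1)(A_{k,0}^r − A_{k,0}^{r+1}) for all r ≥ 1. -/
lemma C_of_neg (n : ℤ) {r : ℤ} (hr : r < 0) : C n r = 0 := if_pos hr

lemma C_of_nonneg {n r : ℤ} (hn : 0 ≤ n) (hr : 0 ≤ r) : C n r = n.toNat.choose r.toNat := by
  rw [C, if_neg hr.not_gt, if_pos hn]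

lemma C_self_s9 {n : ℤ} (hn : 0 ≤ n) : C n n = 1 := by
  simp [C_of_nonneg hn hn]

lemma C_add_one {n : ℤ} (hn : 0 ≤ n) (j : ℤ) : C (n + 1) j = C n j + C n (j - 1) := by
  rcases lt_or_ge j 0 with hj | hj
  · simp [C_of_neg _ hj, C_of_neg _ (show j - 1 < 0 by omega)]
  rcases hj.eq_or_lt with rfl | hj
  · simp [C_of_nonneg (by omega : 0 ≤ n + 1) le_rfl, C_of_nonneg hn le_rfl, C_of_neg]
  rw [C_of_nonneg (by omega) hj.le, C_of_nonneg hn hj.le, C_of_nonneg hn (by omega),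
    show (n + 1).toNat = n.toNat + 1 by omega, show j.toNat = (j - 1).toNat + 1 by omega,
    Nat.choose_succ_succ', Nat.cast_add, add_comm]

lemma mul_C {n : ℤ} (hn : 0 ≤ n) (j : ℤ) : j * C n j = (n - j + 1) * C n (j - 1) := by
  rcases le_or_gt j 0 with hj | hj
  · rw [C_of_neg _ (show j - 1 < 0 by omega)]
    rcases hj.lt_or_eq with hj | rfl
    · rw [C_of_neg _ hj, mul_zero, mul_zero]
    · ring
  rw [C_of_nonneg hn hj.le, C_of_nonneg hn (by omega)]
  have h := Nat.choose_succ_right_eq n.toNat (j - 1).toNat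
  rw [show (j - 1).toNat + 1 = j.toNat by omega] at h
  rcases le_or_gt j (n + 1) with hjn | hjn
  · zify [show (j - 1).toNat ≤ n.toNat by omega] at h
    rw [Int.toNat_of_nonneg hn, Int.toNat_of_nonneg hj.le,
      Int.toNat_of_nonneg (show 0 ≤ j - 1 by omega)] at h
    linear_combination h
  · rw [Nat.choose_eq_zero_of_lt (show n.toNat < j.toNat by omega),
      Nat.choose_eq_zero_of_lt (show n.toNat < (j - 1).toNat by omega)]
    simp

lemma A_succ_one {k r : ℤ} (hr : 0 ≤ r) :
    A (k + 1) 1 r = r * C (2 * k) (k - r - 1) + (r + 1) * C (2 * k) (k - r) := by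
  have h₁ : C r (r - 1) = r := by
    simpa [C_self_s9 hr] using (mul_C hr r).symm
  have h₂ : C (r + 1) r = r + 1 := by
    simpa [C_self_s9 (show 0 ≤ r + 1 by omega)] using (mul_C (show 0 ≤ r + 1 by omega) (r + 1)).symm
  rw [A, show 1 + r - 1 = r by ring, show 1 + r = r + 1 by ring, h₁, h₂]
  ring_nf

lemma A_zero_zero (k : ℤ) : A k 0 0 = C (2 * k - 1) k := by
  simp [A, C_of_neg, C_self_s9]

lemma A_zero_of_pos {k r : ℤ} (hr : 1 ≤ r) :
    A k 0 r = C (2 * k - 1) (k - r - 1) + C (2 * k - 1) (k - r) := by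
  simp [A, C_self_s9 (show 0 ≤ r - 1 by omega), C_self_s9 (show 0 ≤ r by omega)]

lemma A_succ_one_eq {k r : ℤ} (hk : 1 ≤ k) (hr : 0 ≤ r) :
    A (k + 1) 1 r = (k + 1) * (C (2 * k - 1) (k - r) - C (2 * k - 1) (k - r - 2)) := by
  have hn : 0 ≤ 2 * k - 1 := by omega
  have pascal₁ := C_add_one hn (k - r)
  have pascal₂ := C_add_one hn (k - r - 1)
  have absorb₁ := mul_C hn (k - r)
  have absorb₂ := mul_C hn (k - r - 1)
  rw [sub_add_cancel] at pascal₁ pascal₂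
  rw [show k - r - 1 - 1 = k - r - 2 by ring] at pascal₂ absorb₂
  rw [A_succ_one hr]
  linear_combination (r + 1) * pascal₁ + r * pascal₂ - absorb₁ - absorb₂

lemma C_two_mul_sub_one_symm {k : ℤ} (hk : 1 ≤ k) : C (2 * k - 1) k = C (2 * k - 1) (k - 1) := by
  have h := mul_C (show 0 ≤ 2 * k - 1 by omega) k
  rw [show 2 * k - 1 - k + 1 = k by ring] at h
  exact mul_left_cancel₀ (by omega) h

theorem stmt_9 (k : ℤ) (hk : 1 ≤ k) :
    A (k + 1) 1 0 = (k + 1) * (2 * A k 0 0 - A k 0 1) ∧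
    ∀ r : ℤ, 1 ≤ r → A (k + 1) 1 r = (k + 1) * (A k 0 r - A k 0 (r + 1)) := by
  refine ⟨?_, fun r hr => ?_⟩
  · rw [A_succ_one_eq hk le_rfl, A_zero_zero, A_zero_of_pos le_rfl,
      ← C_two_mul_sub_one_symm hk]
    ring_nf
  · rw [A_succ_one_eq hk (by omega), A_zero_of_pos hr, A_zero_of_pos (by omega)]
    ring_nf
end

section
/- For integers k ≥ 1, l ≥ 2 and -1 ≤ r ≤ k-l+1: (k-1)(l-1)l · A_{k+1,l}^r − (k-1)(k+1)(k-l+2) · A_{k,l-2}^{r+1} = −(k+1)(2k-l)(2k-l+1) · A_{k-1,l-2}^{r+1}. -/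
lemma key (n : ℤ) (j : ℕ) : ((Nat.factorial j : ℕ) : ℤ) * C n (j : ℤ) = (descPochhammer ℤ j).eval n := by
  rcases le_or_gt 0 n with hn | hn
  · rw [C, if_neg (by omega), if_pos hn]
    rw [← Int.toNat_of_nonneg hn, descPochhammer_eval_eq_descFactorial ℤ n.toNat j]
    rw [Int.toNat_natCast]
    norm_cast
    rw [Nat.descFactorial_eq_factorial_mul_choose]
  · rw [C, if_neg (by omega), if_neg (by omega)]
    have h1 : (ascPochhammer ℤ j).eval (-n) = (-1)^j * (descPochhammer ℤ j).eval n :=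
      ascPochhammer_eval_neg_eq_descPochhammer (R := ℤ) n j
    have h2 : (-n) = (((-n).toNat : ℕ) : ℤ) := by omega
    have h3 := ascPochhammer_eval_cast (S := ℤ) j (-n).toNat
    have h4 : (ascPochhammer ℕ j).eval (-n).toNat = (-n).toNat.ascFactorial j :=
      ascPochhammer_nat_eq_ascFactorial _ j
    have h5 : (-n).toNat.ascFactorial j = Nat.factorial j * ((-n).toNat + j - 1).choose j :=
      Nat.ascFactorial_eq_factorial_mul_choose' _ _
    have h6 : ((j : ℤ) - n - 1).toNat = (-n).toNat + j - 1 := by omega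
    have h7 : ((j:ℤ)).toNat = j := by omega
    have hsq : ((-1 : ℤ))^j * ((-1:ℤ))^j = 1 := by
      rw [← pow_add]; exact Even.neg_one_pow ⟨j, by ring⟩
    rw [h6, h7]
    have : (descPochhammer ℤ j).eval n = (-1)^j * ((Nat.factorial j * ((-n).toNat + j - 1).choose j : ℕ) : ℤ) := by
      rw [← h5, ← h4, h3, ← h2, h1, ← mul_assoc, hsq, one_mul]
    rw [this]
    push_cast
    ring

lemma desc_succ_left_eval (j : ℕ) (x : ℤ) :
    (descPochhammer ℤ (j+1)).eval x = x * (descPochhammer ℤ j).eval (x - 1) := by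
  induction j with
  | zero => simp
  | succ j ih =>
      rw [descPochhammer_succ_eval, ih, descPochhammer_succ_eval]
      push_cast; ring

lemma H3 (n r : ℤ) : (r + 1) * C n (r + 1) = (n - r) * C n r := by
  rcases lt_or_ge r 0 with h | h
  · rcases eq_or_lt_of_le (by omega : r + 1 ≤ 0) with h1 | h1
    · rw [C_neg h, show r + 1 = 0 by omega]; ring
    · rw [C_neg h, C_neg (by omega)]; ring
  · obtain ⟨j, rfl⟩ := Int.eq_ofNat_of_zero_le h
    apply mul_left_cancel₀ (show ((Nat.factorial j : ℕ) : ℤ) ≠ 0 by exact_mod_cast (Nat.factorial_ne_zero j))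
    have k1 := key n j
    have k2 := key n (j + 1)
    have hd := descPochhammer_succ_eval j n
    push_cast [Nat.factorial_succ] at k2
    linear_combination k2 + hd - (n - (j:ℤ)) * k1

lemma H2 (n r : ℤ) : (n - r) * C n r = n * C (n - 1) r := by
  rcases lt_or_ge r 0 with h | h
  · rw [C_neg h, C_neg h]; ring
  · obtain ⟨j, rfl⟩ := Int.eq_ofNat_of_zero_le h
    apply mul_left_cancel₀ (show ((Nat.factorial j : ℕ) : ℤ) ≠ 0 by exact_mod_cast (Nat.factorial_ne_zero j))
    have k1 := key n j
    have k2 := key (n - 1) j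
    have hd := descPochhammer_succ_eval j n
    have hl := desc_succ_left_eval j n
    linear_combination (n - (j:ℤ)) * k1 - n * k2 - hd + hl

theorem stmt_11 (k l r : ℤ) (hk : 1 ≤ k) (hl : 2 ≤ l) (hr : -1 ≤ r) (hr' : r ≤ k - l + 1) :
    (k - 1) * (l - 1) * l * A (k + 1) l r - (k - 1) * (k + 1) * (k - l + 2) * A k (l - 2) (r + 1)
      = -((k + 1) * (2 * k - l) * (2 * k - l + 1) * A (k - 1) (l - 2) (r + 1)) := by
  have hA1 : A (k + 1) l r =
      C (l + r - 1) (r - 1) * C (2*k - l + 1) (k - l - r)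
        + C (l + r) r * C (2*k - l + 1) (k - l - r + 1) := by
    unfold A
    rw [show 2*(k+1) - l - 1 = 2*k - l + 1 by ring, show (k+1) - l - r - 1 = k - l - r by ring,
        show (k+1) - l - r = k - l - r + 1 by ring]
  have hA2 : A k (l - 2) (r + 1) =
      C (l + r - 2) r * C (2*k - l + 1) (k - l - r)
        + C (l + r - 1) (r + 1) * C (2*k - l + 1) (k - l - r + 1) := by
    unfold A
    rw [show l - 2 + (r+1) - 1 = l + r - 2 by ring, show r + 1 - 1 = r by ring,
        show 2*k - (l-2) - 1 = 2*k - l + 1 by ring, show k - (l-2) - (r+1) - 1 = k - l - r by ring,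
        show l - 2 + (r+1) = l + r - 1 by ring, show k - (l-2) - (r+1) = k - l - r + 1 by ring]
  have hA3 : A (k - 1) (l - 2) (r + 1) =
      C (l + r - 2) r * C (2*k - l - 1) (k - l - r - 1)
        + C (l + r - 1) (r + 1) * C (2*k - l - 1) (k - l - r) := by
    unfold A
    rw [show l - 2 + (r+1) - 1 = l + r - 2 by ring, show r + 1 - 1 = r by ring,
        show 2*(k-1) - (l-2) - 1 = 2*k - l - 1 by ring,
        show (k-1) - (l-2) - (r+1) - 1 = k - l - r - 1 by ring,
        show l - 2 + (r+1) = l + r - 1 by ring, show (k-1) - (l-2) - (r+1) = k - l - r by ring]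
  rw [hA1, hA2, hA3]
  rcases eq_or_lt_of_le hr with hr0 | hr0
  · -- r = -1
    have hrv : r = -1 := hr0.symm
    subst hrv
    rw [C_neg (by omega : (-1:ℤ) - 1 < 0), C_neg (by omega : (-1:ℤ) < 0)]
    have e1 := H3 (2*k - l + 1) (k - l + 1)
    have e2 := H2 (2*k - l + 1) (k - l + 1)
    have e3 := H2 (2*k - l) (k - l + 1)
    have hP3 : C (l + -1 - 2) (-1) = 0 := C_neg (by omega)
    have hP4 : C (l + -1 - 1) (-1 + 1) = 1 := by
      rw [show (-1:ℤ) + 1 = 0 by ring, C]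
      rcases le_or_gt 0 (l + -1 - 1) with h | h
      · simp [h]
      · simp [h, not_le.mpr h]
    rw [hP3, hP4]
    rw [show k - l - -1 = k - l + 1 by ring]
    rw [show 2*k - l + 1 - 1 = 2*k - l by ring] at e2
    linear_combination (-(k+1)*(k-1)) * e1 + (-(k+1)*(k-1)) * e2 + (-(k+1)*(2*k - l + 1)) * e3
  · rcases eq_or_lt_of_le hr' with hrs | hrs
    · -- r = k - l + 1
      subst hrs
      rw [show k - l - (k - l + 1) = -1 by ring]
      simp only [show (-1:ℤ) - 1 = -2 from by ring, show (-1:ℤ) + 1 = 0 from by ring,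
        C_neg (show (-1:ℤ) < 0 by norm_num), C_neg (show (-2:ℤ) < 0 by norm_num), C_zero]
      rw [show l + (k - l + 1) = k + 1 by ring]
      rw [show k + 1 - 1 = k by ring, show k + 1 - 2 = k - 1 by ring,
          show k - l + 1 + 1 = k - l + 2 by ring]
      have e1 := H3 k (k - l + 1)
      have e2 := H2 (k + 1) (k - l + 1)
      rw [show k - l + 1 + 1 = k - l + 2 by ring] at e1
      rw [show k + 1 - 1 = k by ring] at e2
      linear_combination (k-1)*(l-1)*e2 - (k-1)*(k+1)*e1
    · -- generic: 0 ≤ r ≤ k - l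
      have eP_e := H3 (l + r) (r - 1)
      rw [show r - 1 + 1 = r by ring] at eP_e
      have eP_f := H2 (l + r) (r - 1)
      rw [show l + r - 1 = l + r - 1 by ring] at eP_f
      have eP_c := H2 (l + r) r
      have eP_a := H2 (l + r - 1) r
      rw [show l + r - 1 - 1 = l + r - 2 by ring] at eP_a
      have eP_b := H3 (l + r - 1) r
      have eQ_a := H2 (2*k - l) (k - l - r)
      have eQ_b := H2 (2*k - l + 1) (k - l - r)
      rw [show 2*k - l + 1 - 1 = 2*k - l by ring] at eQ_b
      have eQ_c := H3 (2*k - l + 1) (k - l - r)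
      have eQ_d := H3 (2*k - l) (k - l - r - 1)
      rw [show k - l - r - 1 + 1 = k - l - r by ring] at eQ_d
      have eQ_e := H2 (2*k - l) (k - l - r - 1)
      have d1 : l*(l-1)*C (l + r - 1) (r - 1) = r*(l + r - 1)*C (l + r - 2) r := by
        apply mul_left_cancel₀ (show (l + r : ℤ) ≠ 0 by omega)
        linear_combination (-(l*(l-1)))*eP_f + (-(l*(l-1)))*eP_e + (l-1)*r*eP_c + r*(l+r)*eP_a
      have d2 : l*(l-1)*C (l + r) r = (l+r)*(l+r-1)*C (l + r - 2) r := by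
        linear_combination (l-1)*eP_c + (l+r)*eP_a
      have d3 : (r+1)*C (l + r - 1) (r + 1) = (l+r-1)*C (l + r - 2) r := by
        linear_combination eP_b + eP_a
      have d4 : (k+r)*(k+r+1)*C (2*k - l + 1) (k - l - r)
          = (2*k-l)*(2*k-l+1)*C (2*k - l - 1) (k - l - r) := by
        linear_combination (k+r)*eQ_b + (2*k-l+1)*eQ_a
      have d5 : (k+r)*(k-l-r+1)*C (2*k - l + 1) (k - l - r + 1)
          = (2*k-l)*(2*k-l+1)*C (2*k - l - 1) (k - l - r) := by
        linear_combination (k+r)*eQ_c + (k+r)*eQ_b + (2*k-l+1)*eQ_a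
      have d6 : (k+r)*(2*k-l)*C (2*k - l - 1) (k - l - r - 1)
          = (k-l-r)*(2*k-l)*C (2*k - l - 1) (k - l - r) := by
        linear_combination (-(k+r))*eQ_d + (-(k+r))*eQ_e + (k-l-r)*eQ_a
      have h1 : (0:ℤ) < l := by omega
      have h2 : (0:ℤ) < l - 1 := by omega
      have h3 : (0:ℤ) < r + 1 := by omega
      have h4 : (0:ℤ) < k + r := by omega
      have h5 : (0:ℤ) < k + r + 1 := by omega
      have h6 : (0:ℤ) < k - l - r + 1 := by omega
      apply mul_left_cancel₀ (ne_of_gt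
        (mul_pos (mul_pos (mul_pos (mul_pos (mul_pos h1 h2) h3) h4) h5) h6))
      linear_combination
        (r+1)*(k-l-r+1)*((k-1)*(l-1)*l) * ((k+r)*(k+r+1)*C (2*k-l+1) (k-l-r) * d1
          + r*(l+r-1)*C (l+r-2) r * d4)
        + (r+1)*(k+r+1)*((k-1)*(l-1)*l) * ((k+r)*(k-l-r+1)*C (2*k-l+1) (k-l-r+1) * d2
          + (l+r)*(l+r-1)*C (l+r-2) r * d5)
        + l*(l-1)*(r+1)*(k-l-r+1)*(-((k-1)*(k+1)*(k-l+2))) * C (l+r-2) r * d4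
        + l*(l-1)*(k+r+1)*(-((k-1)*(k+1)*(k-l+2))) * ((k+r)*(k-l-r+1)*C (2*k-l+1) (k-l-r+1) * d3
          + (l+r-1)*C (l+r-2) r * d5)
        + (k+1)*(2*k-l+1)*l*(l-1)*(r+1)*(k+r+1)*(k-l-r+1) * C (l+r-2) r * d6
        + (k+1)*(2*k-l)*(2*k-l+1)*l*(l-1)*(k+r)*(k+r+1)*(k-l-r+1) * C (2*k-l-1) (k-l-r) * d3
end

section
/- Let P_k(v) = v^k (1-v)^{k-1}, Q(v) = v(1-v), R(v) = 1 - 3v. Then for every l ≥ 0 and k ≥ 1, (k - l + 2) P_{k+1}^{(l)}(v) = (k+2) P_k^{(l)}(v) Q(v) + l P_k^{(l-1)}(v) R(v) + (k-1)(l-1)l P_k^{(l-2)}(v), where terms with negative derivative order are omitted (they carry vanishing coefficients). -/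
/-!
Since `P (k + 1) = Q * P k` with `Q` quadratic, the Leibniz rule gives
`P (k + 1)^(l) = Q P k^(l) + l (1 - 2v) P k^(l - 1) - l (l - 1) P k^(l - 2)`.
Differentiating `P (k + 1)' = (k + 1 - (2k + 1) v) P k` `l - 1` times gives a second expression
`P (k + 1)^(l) = (k + 1 - (2k + 1) v) P k^(l - 1) - (l - 1) (2k + 1) P k^(l - 2)`.
The recurrence is `k + 2` times the first identity minus `l` times the second.
-/

noncomputable def P (k : ℕ) : ℝ → ℝ := fun v => v ^ k * (1 - v) ^ (k - 1)

noncomputable def Q : ℝ → ℝ := fun v => v * (1 - v)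

noncomputable def R : ℝ → ℝ := fun v => 1 - 3 * v

section Quadratic

variable {𝕜 : Type*} [NontriviallyNormedField 𝕜] (a b c : 𝕜)

lemma deriv_quadratic : deriv (fun y => a + b * y + c * y ^ 2) = fun y => b + 2 * c * y := by
  funext y
  have h := (((hasDerivAt_id y).const_mul b).const_add a).fun_add ((hasDerivAt_pow 2 y).const_mul c)
  simp only [id, mul_one, Nat.cast_ofNat] at h
  rw [h.deriv]
  ring

lemma iteratedDeriv_two_quadratic :
    iteratedDeriv 2 (fun y => a + b * y + c * y ^ 2) = fun _ => 2 * c := by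
  rw [iteratedDeriv_succ', iteratedDeriv_one, deriv_quadratic]
  funext y
  simp

lemma iteratedDeriv_add_three_quadratic (i : ℕ) (x : 𝕜) :
    iteratedDeriv (i + 3) (fun y => a + b * y + c * y ^ 2) x = 0 := by
  rw [iteratedDeriv_succ', iteratedDeriv_succ', iteratedDeriv_succ', deriv_quadratic]
  simp

theorem iteratedDeriv_quadratic_mul {f : 𝕜 → 𝕜} {n : ℕ} {x : 𝕜} (hf : ContDiffAt 𝕜 n f x) :
    iteratedDeriv n (fun y => (a + b * y + c * y ^ 2) * f y) x =
      (a + b * x + c * x ^ 2) * iteratedDeriv n f x + n * (b + 2 * c * x) * iteratedDeriv (n - 1) f x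
        + n * (n - 1) * c * iteratedDeriv (n - 2) f x := by
  rw [iteratedDeriv_fun_mul (by fun_prop) hf]
  rcases n with _ | _ | m
  · simp
  · simp [Finset.sum_range_succ, deriv_quadratic]
  · -- `𝕜` may have characteristic 2, which rules out `Nat.cast_choose_two`.
    have hchoose : ((m + 2).choose 2 : 𝕜) * 2 = (m + 2) * (m + 1) := by
      have h : (m + 2).choose 2 * 2 = (m + 2) * (m + 1) := by
        simpa using Nat.choose_succ_right_eq (m + 2) 1
      simpa using congrArg (Nat.cast : ℕ → 𝕜) h
    rw [Finset.sum_range_succ', Finset.sum_range_succ', Finset.sum_range_succ']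
    simp only [iteratedDeriv_add_three_quadratic, mul_zero, zero_mul, Finset.sum_const_zero,
      zero_add, Nat.reduceAdd, iteratedDeriv_two_quadratic, iteratedDeriv_one, deriv_quadratic,
      iteratedDeriv_zero, Nat.choose_zero_right, Nat.choose_one_right, Nat.add_sub_cancel,
      Nat.sub_zero]
    push_cast
    linear_combination c * iteratedDeriv m f x * hchoose

end Quadratic

lemma contDiff_P (k : ℕ) {n : WithTop ℕ∞} : ContDiff ℝ n (P k) := by
  unfold P
  fun_prop

lemma P_succ {k : ℕ} (hk : 1 ≤ k) (v : ℝ) : P (k + 1) v = Q v * P k v := by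
  obtain ⟨j, rfl⟩ := Nat.exists_eq_add_of_le' hk
  simp only [P, Q, Nat.add_sub_cancel]
  ring

lemma hasDerivAt_P_succ {k : ℕ} (hk : 1 ≤ k) (v : ℝ) :
    HasDerivAt (P (k + 1)) ((k + 1 - (2 * k + 1) * v) * P k v) v := by
  obtain ⟨j, rfl⟩ := Nat.exists_eq_add_of_le' hk
  have h := (hasDerivAt_pow (j + 2) v).fun_mul (((hasDerivAt_id' v).const_sub 1).fun_pow (j + 1))
  refine h.congr_deriv ?_
  simp only [P, Nat.add_sub_cancel]
  push_cast
  ring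

theorem iteratedDeriv_P_succ {k : ℕ} (hk : 1 ≤ k) (l : ℕ) (v : ℝ) :
    iteratedDeriv l (P (k + 1)) v = Q v * iteratedDeriv l (P k) v
      + l * (1 - 2 * v) * iteratedDeriv (l - 1) (P k) v
      - l * (l - 1) * iteratedDeriv (l - 2) (P k) v := by
  have hP : P (k + 1) = fun w => (0 + 1 * w + (-1) * w ^ 2) * P k w :=
    funext fun w => (P_succ hk w).trans (by rw [Q]; ring)
  rw [hP, iteratedDeriv_quadratic_mul _ _ _ (contDiff_P k).contDiffAt, Q]
  ring

theorem iteratedDeriv_succ_P_succ {k : ℕ} (hk : 1 ≤ k) (m : ℕ) (v : ℝ) :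
    iteratedDeriv (m + 1) (P (k + 1)) v = (k + 1 - (2 * k + 1) * v) * iteratedDeriv m (P k) v
      - m * (2 * k + 1) * iteratedDeriv (m - 1) (P k) v := by
  have hP' : deriv (P (k + 1)) = fun w => (k + 1 + (-(2 * k + 1)) * w + 0 * w ^ 2) * P k w :=
    funext fun w => (hasDerivAt_P_succ hk w).deriv.trans (by ring)
  rw [iteratedDeriv_succ', hP', iteratedDeriv_quadratic_mul _ _ _ (contDiff_P k).contDiffAt]
  ring

theorem stmt_14 (k l : ℕ) (hk : 1 ≤ k) (v : ℝ) :
    ((k : ℝ) - l + 2) * iteratedDeriv l (P (k + 1)) v =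
      ((k : ℝ) + 2) * iteratedDeriv l (P k) v * Q v
        + (l : ℝ) * iteratedDeriv (l - 1) (P k) v * R v
        + ((k : ℝ) - 1) * ((l : ℝ) - 1) * (l : ℝ) * iteratedDeriv (l - 2) (P k) v := by
  rcases l with _ | m
  · linear_combination ((k : ℝ) + 2) * iteratedDeriv_P_succ hk 0 v
  · have hA := iteratedDeriv_P_succ hk (m + 1) v
    have hC := iteratedDeriv_succ_P_succ hk m v
    simp only [Nat.add_sub_cancel, Nat.reduceSubDiff] at hA ⊢
    rw [R]
    push_cast at hA ⊢
    linear_combination ((k : ℝ) + 2) * hA - ((m : ℝ) + 1) * hC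
end

section
/- Let P_k(v) = v^k (1-v)^{k-1}, Q(v) = v(1-v), R(v) = 1 - 3v. Then for every l ≥ 0 and k ≥ 2, (k-1)k(k-l) P_{k-1}^{(l)}(v) = (k-2) P_k^{(l+2)}(v) Q(v) + (2k-l-2) P_k^{(l+1)}(v) R(v) + (k+1)(2k-l-2)(2k-l-1) P_k^{(l)}(v). -/
open Polynomial

theorem iterate_derivative_second_order_eq {S : Type*} [CommRing S] {q a b f u : S[X]}
    (hq : derivative^[3] q = 0) (ha : derivative^[2] a = 0) (hb : derivative b = 0)
    (h : q * derivative^[2] u + a * derivative u + b * u = f) (n : ℕ) :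
    q * derivative^[n + 2] u + (a + (n : S[X]) * derivative q) * derivative^[n + 1] u
      + (b + (n : S[X]) * derivative a + (n.choose 2 : S[X]) * derivative^[2] q)
        * derivative^[n] u
      = derivative^[n] f := by
  induction n with
  | zero => simpa using h
  | succ n ih =>
    simp only [Function.iterate_succ_apply', Function.iterate_zero_apply] at hq ha ih ⊢
    rw [← ih, Nat.choose_succ_succ', Nat.choose_one_right]
    simp only [derivative_add, derivative_mul, derivative_natCast, hq, ha, hb]
    push_cast
    ring

theorem iteratedDeriv_polynomial_eval {𝕜 : Type*} [NontriviallyNormedField 𝕜] (p : 𝕜[X])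
    (n : ℕ) : iteratedDeriv n (fun x => p.eval x) = fun x => (derivative^[n] p).eval x := by
  induction n generalizing p with
  | zero => simp
  | succ n ih =>
    rw [iteratedDeriv_succ', Function.iterate_succ_apply, ← ih]
    congr 1
    exact funext fun x => Polynomial.deriv p

noncomputable def polyP (k : ℕ) : ℝ[X] := X ^ k * (1 - X) ^ (k - 1)

theorem P_eq_eval_polyP (k : ℕ) : P k = fun v => (polyP k).eval v := by
  funext v
  simp [P, polyP]

section polyP

variable (m l : ℕ)

theorem polyP_add_two : polyP (m + 2) = X * (1 - X) * polyP (m + 1) := by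
  simp only [polyP, Nat.add_sub_cancel, show m + 2 - 1 = m + 1 from rfl]
  ring

theorem derivative_polyP_add_two :
    derivative (polyP (m + 2))
      = ((m : ℝ[X]) + 2 - (2 * (m : ℝ[X]) + 3) * X) * polyP (m + 1) := by
  simp only [polyP, Nat.add_sub_cancel, show m + 2 - 1 = m + 1 from rfl, derivative_mul,
    derivative_pow, derivative_sub, derivative_one, derivative_X]
  simp only [Nat.cast_add, Nat.cast_ofNat, Nat.cast_one, map_add, map_natCast, map_ofNat, map_one]
  ring

theorem iterate_derivative_polyP_add_one :
    C (((m : ℝ) + 2) * (m + 1)) * derivative^[l] (polyP (m + 1))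
      = ((m : ℝ[X]) + 1 - (2 * (m : ℝ[X]) + 3) * X) * derivative^[l + 1] (polyP (m + 2))
        + (2 * (m : ℝ[X]) + 3) * (2 * (m : ℝ[X]) + 3 - (l : ℝ[X]))
          * derivative^[l] (polyP (m + 2)) := by
  have base : 0 * derivative^[2] (polyP (m + 2))
      + ((m : ℝ[X]) + 1 - (2 * (m : ℝ[X]) + 3) * X) * derivative (polyP (m + 2))
      + (2 * (m : ℝ[X]) + 3) ^ 2 * polyP (m + 2)
      = C (((m : ℝ) + 2) * (m + 1)) * polyP (m + 1) := by
    rw [derivative_polyP_add_two, polyP_add_two]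
    simp only [map_mul, map_add, map_natCast, map_ofNat, map_one]
    ring
  have h := iterate_derivative_second_order_eq (by simp) (by simp) (by rw [derivative_pow]; simp)
    base l
  simp only [iterate_derivative_C_mul, iterate_derivative_zero, derivative_zero, derivative_sub,
    derivative_add, derivative_mul, derivative_natCast, derivative_ofNat, derivative_one,
    derivative_X] at h
  linear_combination -h

theorem iterate_derivative_polyP_ode :
    X * (1 - X) * derivative^[l + 2] (polyP (m + 2))
      + (((l : ℝ[X]) + 1) * (1 - 2 * X) - ((m : ℝ[X]) + 2) + (2 * (m : ℝ[X]) + 3) * X)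
        * derivative^[l + 1] (polyP (m + 2))
      + ((2 * (m : ℝ[X]) + 3) + (l : ℝ[X]) * (2 * (m : ℝ[X]) + 1) - 2 * (l.choose 2 : ℝ[X]))
        * derivative^[l] (polyP (m + 2))
      = 0 := by
  have ode : X * (1 - X) * derivative (polyP (m + 2))
      = ((m : ℝ[X]) + 2 - (2 * (m : ℝ[X]) + 3) * X) * polyP (m + 2) := by
    rw [derivative_polyP_add_two, polyP_add_two]
    ring
  have base : X * (1 - X) * derivative^[2] (polyP (m + 2))
      + (1 - 2 * X - ((m : ℝ[X]) + 2 - (2 * (m : ℝ[X]) + 3) * X)) * derivative (polyP (m + 2))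
      + (2 * (m : ℝ[X]) + 3) * polyP (m + 2) = 0 := by
    have h := congrArg derivative ode
    simp only [derivative_mul, derivative_sub, derivative_add, derivative_X, derivative_one,
      derivative_natCast, derivative_ofNat] at h
    simp only [Function.iterate_succ_apply', Function.iterate_zero_apply]
    linear_combination h
  have hq : derivative^[2] (X * (1 - X) : ℝ[X]) = -2 := by
    simp only [Function.iterate_succ_apply', Function.iterate_zero_apply, derivative_mul,
      derivative_add, derivative_sub, derivative_X, derivative_one, derivative_zero]
    ring
  have h := iterate_derivative_second_order_eq (by simp) (by simp) (by simp) base l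
  simp only [hq, iterate_derivative_zero, derivative_mul, derivative_sub, derivative_add,
    derivative_X, derivative_one, derivative_natCast, derivative_ofNat] at h
  linear_combination h

end polyP

theorem stmt_15 (k l : ℕ) (hk : 2 ≤ k) (v : ℝ) :
    ((k : ℝ) - 1) * (k : ℝ) * ((k : ℝ) - l) * iteratedDeriv l (P (k - 1)) v =
      ((k : ℝ) - 2) * iteratedDeriv (l + 2) (P k) v * Q v
        + (2 * (k : ℝ) - l - 2) * iteratedDeriv (l + 1) (P k) v * R v
        + ((k : ℝ) + 1) * (2 * (k : ℝ) - l - 2) * (2 * (k : ℝ) - l - 1) * iteratedDeriv l (P k) v := by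
  obtain ⟨m, rfl⟩ : ∃ m, k = m + 2 := ⟨k - 2, by omega⟩
  have hlower := congrArg (eval v) (iterate_derivative_polyP_add_one m l)
  have hode := congrArg (eval v) (iterate_derivative_polyP_ode m l)
  simp only [P_eq_eval_polyP, iteratedDeriv_polynomial_eval, show m + 2 - 1 = m + 1 from rfl]
  simp only [Q, R, eval_mul, eval_add, eval_sub, eval_C, eval_natCast, eval_one, eval_ofNat,
    eval_X, eval_zero, Nat.cast_choose_two, Nat.cast_add, Nat.cast_ofNat] at hlower hode ⊢
  linear_combination ((m : ℝ) + 2 - l) * hlower - m * hode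
end

section
/- Define, for I_ν the modified Bessel function of the first kind, I_{ν,0}(z) = I_ν(z) and I_{ν,n}(z) = I_{ν-n}(z) + I_{ν+n}(z) for n ≥ 1. Then for every n ≥ 0, ∑_{r=0}^{⌊n/2⌋} D_n^r · 2^{n-2r} I_ν^{(n-2r)}(z) = I_{ν,n}(z), where D_n^r = (-1)^r (C(n-r,r) + C(n-r-1,r-1)). -/
lemma C_neg_s17 (a b : ℤ) (hb : b < 0) : C a b = 0 := by simp [C, hb]

lemma C_zero_right (a : ℤ) : C a 0 = 1 := by
  unfold C; split_ifs <;> simp_all <;> omega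

lemma C_zero_of_lt {a b : ℤ} (h0 : 0 ≤ a) (h : a < b) : C a b = 0 := by
  unfold C
  rw [if_neg (by omega), if_pos h0]
  norm_cast
  exact Nat.choose_eq_zero_of_lt (by omega)

lemma C_pascal_s17 (a b : ℤ) : C a b = C (a-1) b + C (a-1) (b-1) := by
  rcases lt_trichotomy b 0 with hb | hb | hb
  · rw [C_neg_s17 _ _ hb, C_neg_s17 _ _ hb, C_neg_s17 _ _ (by omega)]; ring
  · subst hb; rw [C_zero_right, C_zero_right, C_neg_s17 _ _ (by omega)]; ring
  · have hb1 : ¬ (b < 0) := by omega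
    have hb1' : ¬ (b - 1 < 0) := by omega
    have hbt : b.toNat = (b-1).toNat + 1 := by omega
    rcases le_or_gt 1 a with ha | ha
    · -- a ≥ 1
      unfold C
      rw [if_neg hb1, if_neg hb1', if_neg hb1, if_pos (by omega), if_pos (by omega), if_pos (by omega)]
      have hat : a.toNat = (a-1).toNat + 1 := by omega
      rw [hat, hbt, Nat.choose_succ_succ]
      push_cast; ring
    rcases eq_or_lt_of_le (by omega : a ≤ 0) with ha0 | ha0
    · subst ha0
      unfold C
      rw [if_neg hb1, if_neg hb1', if_neg hb1, if_pos le_rfl, if_neg (by omega), if_neg (by omega)]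
      rw [Nat.choose_eq_zero_of_lt (by omega)]
      have e1 : (b - (0-1) - 1).toNat = b.toNat := by omega
      have e2 : (b - 1 - (0-1) - 1).toNat = (b-1).toNat := by omega
      rw [e1, e2, Nat.choose_self, Nat.choose_self, hbt]
      push_cast; ring
    · -- a < 0
      unfold C
      rw [if_neg hb1, if_neg hb1', if_neg hb1, if_neg (by omega), if_neg (by omega), if_neg (by omega)]
      have key : ((b - (a-1) - 1).toNat.choose b.toNat : ℤ)
          = ((b - a - 1).toNat.choose b.toNat : ℤ)
            + ((b - 1 - (a-1) - 1).toNat.choose (b-1).toNat : ℤ) := by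
        have e1 : (b - (a-1) - 1).toNat = (b - a - 1).toNat + 1 := by omega
        have e2 : (b - 1 - (a-1) - 1).toNat = (b - a - 1).toNat := by omega
        rw [e1, e2, hbt, Nat.choose_succ_succ]
        push_cast; ring
      rw [key, hbt]
      push_cast; ring

def f (n : ℕ) (m : ℤ) : ℤ :=
  ∑ r ∈ Finset.range (n+1), (-1)^r * (C ((n:ℤ) - r) r * C ((n:ℤ) - 2*r) (m - r))

lemma f_rec (n : ℕ) (m : ℤ) : f (n+2) m = f (n+1) m + f (n+1) (m-1) - f n (m-1) := by
  have key : ∀ r : ℕ, (-1:ℤ)^r * (C ((n:ℤ)+2 - r) r * C ((n:ℤ)+2 - 2*r) (m - r))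
      = (-1:ℤ)^r * (C ((n:ℤ)+1 - r) r * C ((n:ℤ)+1 - 2*r) (m - r))
        + (-1:ℤ)^r * (C ((n:ℤ)+1 - r) r * C ((n:ℤ)+1 - 2*r) ((m-1) - r))
        + (-1:ℤ)^r * (C ((n:ℤ)+1 - r) ((r:ℤ)-1) * C ((n:ℤ)+2 - 2*r) (m - r)) := by
    intro r
    rw [C_pascal_s17 ((n:ℤ)+2-r) r, C_pascal_s17 ((n:ℤ)+2-2*r) (m-r)]
    rw [show (n:ℤ)+2-(r:ℤ)-1 = (n:ℤ)+1-r by ring,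
        show (n:ℤ)+2-2*(r:ℤ)-1 = (n:ℤ)+1-2*r by ring,
        show m - (r:ℤ) - 1 = (m-1) - r by ring]
    ring
  unfold f
  rw [Finset.sum_range_succ]
  push_cast
  have hlast : ((-1:ℤ)^(n+2) * (C ((n:ℤ)+2 - ((n:ℤ)+2)) ((n:ℤ)+2)
      * C ((n:ℤ)+2 - 2*((n:ℤ)+2)) (m - ((n:ℤ)+2)))) = 0 := by
    rw [show (n:ℤ)+2-((n:ℤ)+2) = 0 by ring, C_zero_of_lt le_rfl (by omega)]
    ring
  rw [hlast, add_zero]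
  rw [Finset.sum_congr rfl (fun r _ => key r), Finset.sum_add_distrib, Finset.sum_add_distrib]
  have hC : ∑ r ∈ Finset.range (n+2),
      (-1:ℤ)^r * (C ((n:ℤ)+1 - r) ((r:ℤ)-1) * C ((n:ℤ)+2 - 2*r) (m - r))
      = - ∑ r ∈ Finset.range (n+1), (-1:ℤ)^r * (C ((n:ℤ) - r) r * C ((n:ℤ) - 2*r) ((m-1) - r)) := by
    rw [Finset.sum_range_succ']
    have h0 : ((-1:ℤ)^0 * (C ((n:ℤ)+1 - ((0:ℕ):ℤ)) (((0:ℕ):ℤ)-1) * C ((n:ℤ)+2 - 2*((0:ℕ):ℤ)) (m - ((0:ℕ):ℤ)))) = 0 := by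
      rw [C_neg_s17 _ _ (by norm_num)]; ring
    rw [h0, add_zero, ← Finset.sum_neg_distrib]
    refine Finset.sum_congr rfl (fun r _ => ?_)
    push_cast
    rw [show (n:ℤ)+1-((r:ℤ)+1) = (n:ℤ)-r by ring,
        show (r:ℤ)+1-1 = (r:ℤ) by ring,
        show (n:ℤ)+2-2*((r:ℤ)+1) = (n:ℤ)-2*r by ring,
        show m - ((r:ℤ)+1) = (m-1) - r by ring]
    ring
  rw [hC]
  ring

lemma C_top_zero (m : ℤ) : C 0 m = if m = 0 then 1 else 0 := by
  rcases lt_trichotomy m 0 with h|h|h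
  · rw [C_neg_s17 _ _ h, if_neg (by omega)]
  · subst h; rw [C_zero_right, if_pos rfl]
  · rw [C_zero_of_lt le_rfl h, if_neg (by omega)]

lemma C_top_one (m : ℤ) : C 1 m = if 0 ≤ m ∧ m ≤ 1 then 1 else 0 := by
  rw [C_pascal_s17, show (1:ℤ)-1 = 0 by ring, C_top_zero, C_top_zero]
  split_ifs <;> omega

lemma f_eq : ∀ (n : ℕ) (m : ℤ), f n m = if 0 ≤ m ∧ m ≤ n then 1 else 0 := by
  intro n
  induction n using Nat.twoStepInduction with
  | zero =>
    intro m
    simp only [f]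
    rw [Finset.sum_range_one]
    push_cast
    simp only [sub_zero, mul_zero, zero_sub, neg_zero, pow_zero, one_mul,
      show (0:ℤ)-0 = 0 by ring, show (0:ℤ)-2*0 = 0 by ring, C_zero_right, C_top_zero]
    split_ifs <;> omega
  | one =>
    intro m
    have h01 : C 0 1 = 0 := C_zero_of_lt le_rfl one_pos
    simp only [f]
    rw [Finset.sum_range_succ, Finset.sum_range_one]
    push_cast
    simp only [sub_zero, mul_zero, pow_zero, one_mul, pow_one,
      show (1:ℤ)-0 = 1 by ring, show (1:ℤ)-2*0 = 1 by ring, show (1:ℤ)-1 = 0 by ring,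
      C_zero_right, h01, C_top_one]
    split_ifs <;> ring_nf <;> omega
  | more n ih1 ih2 =>
    intro m
    rw [f_rec, ih2, ih2, ih1]
    split_ifs <;> omega

lemma sum_f_trunc (n : ℕ) (m : ℤ) :
    ∑ r ∈ Finset.range (n/2+1), (-1:ℤ)^r * (C ((n:ℤ)-r) (r:ℤ) * C ((n:ℤ)-2*r) (m-r)) = f n m := by
  refine Finset.sum_subset ?_ ?_
  · intro x hx
    simp only [Finset.mem_range] at *
    omega
  · intro x hx hnx
    simp only [Finset.mem_range] at hx hnx
    rw [C_zero_of_lt (by omega) (by omega)]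
    ring

lemma E_eq (n : ℕ) (m : ℤ) :
    ∑ r ∈ Finset.range (n/2+1), D (n:ℤ) (r:ℤ) * C ((n:ℤ) - 2*r) (m - r)
      = if m = 0 ∨ m = (n:ℤ) then 1 else 0 := by
  have hD : ∀ r : ℕ, D (n:ℤ) (r:ℤ) * C ((n:ℤ) - 2*r) (m - r)
      = (-1:ℤ)^r * (C ((n:ℤ)-r) (r:ℤ) * C ((n:ℤ)-2*r) (m-r))
        + (-1:ℤ)^r * (C ((n:ℤ)-(r:ℤ)-1) ((r:ℤ)-1) * C ((n:ℤ)-2*r) (m-r)) := by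
    intro r
    simp only [D, Int.toNat_natCast]
    ring
  rw [Finset.sum_congr rfl (fun r _ => hD r), Finset.sum_add_distrib, sum_f_trunc, f_eq]
  have hS2 : ∑ r ∈ Finset.range (n/2+1),
      (-1:ℤ)^r * (C ((n:ℤ)-(r:ℤ)-1) ((r:ℤ)-1) * C ((n:ℤ)-2*r) (m-r))
      = if 2 ≤ n then -(if 0 ≤ m-1 ∧ m-1 ≤ (n:ℤ)-2 then 1 else 0) else 0 := by
    rcases n with _ | _ | k
    · rw [Finset.sum_range_one, C_neg_s17 _ _ (by norm_num : ((0:ℕ):ℤ) - 1 < 0)]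
      norm_num
    · rw [Finset.sum_range_one, C_neg_s17 _ _ (by norm_num : ((0:ℕ):ℤ) - 1 < 0)]
      norm_num
    · rw [show (k+1+1)/2 + 1 = k/2 + 1 + 1 from by omega, Finset.sum_range_succ']
      have h0 : (-1:ℤ)^0 * (C (((k+1+1:ℕ):ℤ) - ((0:ℕ):ℤ) - 1) (((0:ℕ):ℤ) - 1)
          * C (((k+1+1:ℕ):ℤ) - 2*((0:ℕ):ℤ)) (m - ((0:ℕ):ℤ))) = 0 := by
        rw [C_neg_s17 _ _ (by norm_num)]; ring
      rw [h0, add_zero]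
      have hshift : ∀ r : ℕ, (-1:ℤ)^(r+1) * (C (((k+1+1:ℕ):ℤ) - ((r+1:ℕ):ℤ) - 1) (((r+1:ℕ):ℤ) - 1)
            * C (((k+1+1:ℕ):ℤ) - 2*((r+1:ℕ):ℤ)) (m - ((r+1:ℕ):ℤ)))
          = -((-1:ℤ)^r * (C ((k:ℤ)-r) (r:ℤ) * C ((k:ℤ)-2*r) ((m-1)-r))) := by
        intro r
        push_cast
        rw [show (k:ℤ)+1+1 - ((r:ℤ)+1) - 1 = (k:ℤ) - r by ring,
            show (r:ℤ)+1-1 = (r:ℤ) by ring,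
            show (k:ℤ)+1+1 - 2*((r:ℤ)+1) = (k:ℤ) - 2*r by ring,
            show m - ((r:ℤ)+1) = (m-1) - r by ring]
        ring
      rw [Finset.sum_congr rfl (fun r _ => hshift r), Finset.sum_neg_distrib, sum_f_trunc, f_eq]
      split_ifs <;> omega
  rw [hS2]
  split_ifs <;> omega

theorem stmt_17 (I : ℤ → ℂ → ℂ)
    (hrec : ∀ (ν : ℤ) (n : ℕ) (z : ℂ),
      (2 : ℂ) ^ n * iteratedDeriv n (I ν) z
        = ∑ r ∈ Finset.range (n + 1), (C n r : ℂ) * I (ν + n - 2 * r) z)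
    (ν : ℤ) (n : ℕ) (z : ℂ) :
    ∑ r ∈ Finset.range (n / 2 + 1),
        (D n r : ℂ) * 2 ^ (n - 2 * r) * iteratedDeriv (n - 2 * r) (I ν) z
      = if n = 0 then I ν z else I (ν - n) z + I (ν + n) z := by
  have step1 : ∀ r ∈ Finset.range (n/2+1),
      (D (n:ℤ) (r:ℤ) : ℂ) * 2 ^ (n - 2*r) * iteratedDeriv (n - 2*r) (I ν) z
      = ∑ m ∈ Finset.range (n+1),
          (D (n:ℤ) (r:ℤ) : ℂ) * ((C ((n:ℤ)-2*(r:ℤ)) ((m:ℤ)-(r:ℤ)) : ℂ) * I (ν + (n:ℤ) - 2*(m:ℤ)) z) := by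
    intro r hr
    have h2r : 2*r ≤ n := by
      simp only [Finset.mem_range] at hr; omega
    have hc : ((n - 2*r : ℕ) : ℤ) = (n:ℤ) - 2*(r:ℤ) := by omega
    rw [mul_assoc, hrec ν (n-2*r) z, ← Finset.mul_sum]
    congr 1
    have e1 : ∑ m ∈ Finset.range (n+1), (C ((n:ℤ)-2*(r:ℤ)) ((m:ℤ)-(r:ℤ)) : ℂ) * I (ν + (n:ℤ) - 2*(m:ℤ)) z
        = ∑ m ∈ Finset.Ico r (n-r+1), (C ((n:ℤ)-2*(r:ℤ)) ((m:ℤ)-(r:ℤ)) : ℂ) * I (ν + (n:ℤ) - 2*(m:ℤ)) z := by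
      symm
      apply Finset.sum_subset
      · intro x hx
        simp only [Finset.mem_Ico, Finset.mem_range] at *
        omega
      · intro x hx hnx
        simp only [Finset.mem_Ico, Finset.mem_range, not_and, not_lt] at hx hnx
        rcases lt_or_ge x r with h | h
        · rw [C_neg_s17 _ _ (by omega)]
          simp
        · have h2 := hnx h
          rw [C_zero_of_lt (by omega) (by omega)]
          simp
    have e2 : ∑ m ∈ Finset.Ico r (n-r+1), (C ((n:ℤ)-2*(r:ℤ)) ((m:ℤ)-(r:ℤ)) : ℂ) * I (ν + (n:ℤ) - 2*(m:ℤ)) z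
        = ∑ s ∈ Finset.range (n-2*r+1), (C (((n - 2*r : ℕ)) : ℤ) ((s:ℕ):ℤ) : ℂ) * I (ν + ((n - 2*r : ℕ):ℤ) - 2*((s:ℕ):ℤ)) z := by
      rw [Finset.sum_Ico_eq_sum_range, show n - r + 1 - r = n - 2*r + 1 from by omega]
      refine Finset.sum_congr rfl (fun s _ => ?_)
      rw [hc]
      push_cast
      rw [show (r:ℤ)+(s:ℤ)-(r:ℤ) = (s:ℤ) by ring,
          show ν+(n:ℤ)-2*((r:ℤ)+(s:ℤ)) = ν+((n:ℤ)-2*(r:ℤ))-2*(s:ℤ) by ring]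
    rw [e1, e2]
  rw [Finset.sum_congr rfl step1, Finset.sum_comm]
  have step3 : ∀ m ∈ Finset.range (n+1),
      ∑ r ∈ Finset.range (n/2+1),
        (D (n:ℤ) (r:ℤ) : ℂ) * ((C ((n:ℤ)-2*(r:ℤ)) ((m:ℤ)-(r:ℤ)) : ℂ) * I (ν + (n:ℤ) - 2*(m:ℤ)) z)
      = (if (m:ℤ) = 0 ∨ (m:ℤ) = (n:ℤ) then (1:ℂ) else 0) * I (ν + (n:ℤ) - 2*(m:ℤ)) z := by
    intro m _
    simp only [← mul_assoc]
    rw [← Finset.sum_mul]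
    have hcast : ∑ r ∈ Finset.range (n/2+1), (D (n:ℤ) (r:ℤ) : ℂ) * (C ((n:ℤ)-2*(r:ℤ)) ((m:ℤ)-(r:ℤ)) : ℂ)
        = ((∑ r ∈ Finset.range (n/2+1), D (n:ℤ) (r:ℤ) * C ((n:ℤ)-2*(r:ℤ)) ((m:ℤ)-(r:ℤ)) : ℤ) : ℂ) := by
      push_cast
      rfl
    rw [hcast, E_eq n (m:ℤ)]
    simp [apply_ite (Int.cast : ℤ → ℂ)]
  rw [Finset.sum_congr rfl step3]
  by_cases hn : n = 0
  · subst hn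
    rw [Finset.sum_range_one, if_pos rfl]
    norm_num
  · rw [if_neg hn]
    have hsplit : ∀ m ∈ Finset.range (n+1),
        (if (m:ℤ) = 0 ∨ (m:ℤ) = (n:ℤ) then (1:ℂ) else 0) * I (ν + (n:ℤ) - 2*(m:ℤ)) z
        = (if m = 0 then I (ν + (n:ℤ)) z else 0) + (if m = n then I (ν - (n:ℤ)) z else 0) := by
      intro m hm
      rcases eq_or_ne m 0 with rfl | h0
      · rw [if_pos (Or.inl (by norm_num)), if_pos rfl, if_neg (Ne.symm hn)]
        rw [show ν + (n:ℤ) - 2*(((0:ℕ)):ℤ) = ν + (n:ℤ) by norm_num]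
        ring
      · rcases eq_or_ne m n with rfl | h1
        · rw [if_pos (Or.inr rfl), if_neg h0, if_pos rfl]
          rw [show ν + (m:ℤ) - 2*((m:ℕ):ℤ) = ν - (m:ℤ) by ring]
          ring
        · rw [if_neg (by push_cast; omega), if_neg h0, if_neg h1]
          ring
    rw [Finset.sum_congr rfl hsplit, Finset.sum_add_distrib,
      Finset.sum_ite_eq' (Finset.range (n+1)) 0 (fun _ => I (ν + (n:ℤ)) z),
      Finset.sum_ite_eq' (Finset.range (n+1)) n (fun _ => I (ν - (n:ℤ)) z)]
    rw [if_pos (by simp), if_pos (by simp)]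
    ring
end
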